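/- arXiv:2310.13277 — 9 statements merged into one kernel-verified Lean document; each statement's English description precedes it below -/
import Mathlib

section
/- For every integer m ≥ 1, the hypercube {-1,1}^(2^m + m - 1) can be covered by 2^m skewed hyperplanes. Concretely, the 2^m hyperplanes given by sum_{j=1}^{2^m-1} x_j + sum_{j=0}^{m-1} ε_j 2^j x_{2^m+j} = 0, over all sign choices ε ∈ {-1,1}^m, cover the hypercube. -/
/-!
The first `2 ^ m - 1` coordinates of a cube vertex sum to an integer `k` with `|k| < 2 ^ m` and
`k + 2 ^ m` odd. Every such integer is a signed sum `∑ j < m, ±2 ^ j`, so choose signs `σ` with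
`∑ σ j 2 ^ j = -k`, and put `ε j = σ j * x (2 ^ m - 1 + j)`; since `x (2 ^ m - 1 + j) ^ 2 = 1`, the
last `m` terms then sum to `-k`.
-/

open Finset

theorem exists_int_eq_sum_of_eq_one_or_neg_one {R : Type*} [Ring R] {n : ℕ} {x : ℕ → R}
    (hx : ∀ i < n, x i = 1 ∨ x i = -1) :
    ∃ k : ℤ, ∑ i ∈ range n, x i = k ∧ |k| ≤ n ∧ Even (k + n) := by
  induction n with
  | zero => exact ⟨0, by simp⟩
  | succ n ih =>
    obtain ⟨k, hk_sum, hk_abs, hk_even⟩ := ih fun i hi => hx i (by omega)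
    rw [abs_le] at hk_abs
    rw [Int.even_iff] at hk_even
    rcases hx n n.lt_succ_self with h | h
    · refine ⟨k + 1, ?_, by rw [abs_le]; omega, by rw [Int.even_iff]; omega⟩
      push_cast [sum_range_succ, hk_sum, h]
      rfl
    · refine ⟨k - 1, ?_, by rw [abs_le]; omega, by rw [Int.even_iff]; omega⟩
      push_cast [sum_range_succ, hk_sum, h]
      abel

theorem exists_signs_sum_mul_two_pow_eq (m : ℕ) (k : ℤ) (hk : |k| < 2 ^ m)
    (hodd : Odd (k + 2 ^ m)) :
    ∃ σ : ℕ → ℤ, (∀ j < m, σ j = 1 ∨ σ j = -1) ∧ ∑ j ∈ range m, σ j * 2 ^ j = k := by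
  induction m generalizing k with
  | zero => exact ⟨fun _ => 1, by simp, by simp at hk; simp [hk]⟩
  | succ m ih =>
    rw [abs_lt, pow_succ] at hk
    rw [pow_succ, Int.odd_iff] at hodd
    obtain ⟨s, hs, hrest⟩ : ∃ s : ℤ, (s = 1 ∨ s = -1) ∧ |k - s * 2 ^ m| < 2 ^ m ∧
        Odd (k - s * 2 ^ m + 2 ^ m) := by
      rcases le_or_gt 1 k with hk1 | hk1
      · exact ⟨1, .inl rfl, by rw [abs_lt]; omega, by rw [Int.odd_iff]; omega⟩
      · exact ⟨-1, .inr rfl, by rw [abs_lt]; omega, by rw [Int.odd_iff]; omega⟩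
    obtain ⟨σ, hσ, hσ_sum⟩ := ih (k - s * 2 ^ m) hrest.1 hrest.2
    refine ⟨fun j => if j < m then σ j else s, fun j hj => ?_, ?_⟩
    · by_cases hjm : j < m
      · simpa [hjm] using hσ j hjm
      · simpa [hjm] using hs
    · have hlow : ∀ j ∈ range m, (if j < m then σ j else s) * 2 ^ j = σ j * 2 ^ j :=
        fun j hj => by rw [if_pos (mem_range.1 hj)]
      simp only [sum_range_succ, sum_congr rfl hlow, hσ_sum, lt_irrefl, if_false]
      ring

theorem cover_cube_with_two_pow_m_skewed_hyperplanes_general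
    (m : ℕ) (x : ℕ → ℝ)
    (hx : ∀ i < 2 ^ m + m - 1, x i = 1 ∨ x i = -1) :
    ∃ ε : ℕ → ℝ, (∀ j < m, ε j = 1 ∨ ε j = -1) ∧
      (∑ j ∈ Finset.range (2 ^ m - 1), x j) +
        (∑ j ∈ Finset.range m, ε j * 2 ^ j * x (2 ^ m - 1 + j)) = 0 := by
  have hpos : 1 ≤ 2 ^ m := Nat.one_le_two_pow
  obtain ⟨k, hk_sum, hk_abs, hk_even⟩ :=
    exists_int_eq_sum_of_eq_one_or_neg_one (n := 2 ^ m - 1) fun i hi => hx i (by omega)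
  have hcast : ((2 ^ m - 1 : ℕ) : ℤ) = 2 ^ m - 1 := by push_cast [hpos]; rfl
  rw [hcast, abs_le] at hk_abs
  rw [hcast, Int.even_iff] at hk_even
  obtain ⟨σ, hσ, hσ_sum⟩ := exists_signs_sum_mul_two_pow_eq m (-k)
    (by rw [abs_lt]; omega) (by rw [Int.odd_iff]; omega)
  have hx_tail : ∀ j < m, x (2 ^ m - 1 + j) = 1 ∨ x (2 ^ m - 1 + j) = -1 :=
    fun j hj => hx _ (by omega)
  refine ⟨fun j => σ j * x (2 ^ m - 1 + j), fun j hj => ?_, ?_⟩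
  · rcases hσ j hj with h | h <;> rcases hx_tail j hj with h' | h' <;> simp [h, h']
  · have htail : ∑ j ∈ range m, (σ j : ℝ) * x (2 ^ m - 1 + j) * 2 ^ j * x (2 ^ m - 1 + j) =
        ((∑ j ∈ range m, σ j * 2 ^ j : ℤ) : ℝ) := by
      push_cast
      refine sum_congr rfl fun j hj => ?_
      rcases hx_tail j (mem_range.1 hj) with h | h <;> rw [h] <;> ring
    rw [hk_sum, htail, hσ_sum]
    push_cast
    ring

theorem cover_cube_with_two_pow_m_skewed_hyperplanes
    (m : ℕ) (hm : 1 ≤ m) (x : ℕ → ℝ)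
    (hx : ∀ i < 2 ^ m + m - 1, x i = 1 ∨ x i = -1) :
    ∃ ε : ℕ → ℝ, (∀ j < m, ε j = 1 ∨ ε j = -1) ∧
      (∑ j ∈ Finset.range (2 ^ m - 1), x j) +
        (∑ j ∈ Finset.range m, ε j * 2 ^ j * x (2 ^ m - 1 + j)) = 0 :=
  cover_cube_with_two_pow_m_skewed_hyperplanes_general m x hx
end

section
/- If the hypercube {-1,1}^n (with n ≥ 2) is covered by k+1 skewed affine hyperplanes, then k ≥ n/2; equivalently, the minimal number of skewed hyperplanes needed to cover {-1,1}^n is at least n/2 + 1. -/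
open Finset

namespace SkewCover

variable {n : ℕ}

/-- sign function on the cube encoded by booleans -/
def phi (x : Fin n → Bool) (j : Fin n) : ℝ := if x j then 1 else -1

lemma phi_mul_self (x : Fin n → Bool) (j : Fin n) : phi x j * phi x j = 1 := by
  unfold phi; split <;> norm_num

lemma phi_pm (x : Fin n → Bool) (j : Fin n) : phi x j = 1 ∨ phi x j = -1 := by
  unfold phi; split <;> simp

/-- characters of nonempty support sum to zero over the cube -/
lemma sum_phi_prod (S : Finset (Fin n)) (hS : S.Nonempty) :
    ∑ x : Fin n → Bool, ∏ j ∈ S, phi x j = 0 := by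
  classical
  obtain ⟨j0, hj0⟩ := hS
  refine Finset.sum_involution (fun x _ => Function.update x j0 (!x j0)) ?_ ?_ ?_ ?_
  · intro x hx
    have h1 : ∏ j ∈ S, phi x j = phi x j0 * ∏ j ∈ S.erase j0, phi x j :=
      (Finset.mul_prod_erase S _ hj0).symm
    have h2 : ∏ j ∈ S, phi (Function.update x j0 (!x j0)) j
        = phi (Function.update x j0 (!x j0)) j0 * ∏ j ∈ S.erase j0, phi x j := by
      rw [← Finset.mul_prod_erase S _ hj0]
      congr 1
      refine Finset.prod_congr rfl ?_
      intro j hj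
      have : j ≠ j0 := Finset.ne_of_mem_erase hj
      unfold phi
      rw [Function.update_of_ne this]
    have h3 : phi (Function.update x j0 (!x j0)) j0 = - phi x j0 := by
      unfold phi
      rw [Function.update_self]
      cases h : x j0 <;> simp [h]
    rw [h1, h2, h3]; ring
  · intro x hx _
    intro hcontra
    have := congrFun hcontra j0
    simp only [Function.update_self] at this
    exact (Bool.not_ne_self (x j0)) this
  · intro x hx; exact Finset.mem_univ _
  · intro x hx
    funext j
    by_cases h : j = j0
    · subst h
      simp only [Function.update_self, Bool.not_not]
    · simp only [Function.update_of_ne h]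

/-- squarefree part ("permanent coefficients") of a product of affine forms -/
def Pp : List ((Fin n → ℝ) × ℝ) → Finset (Fin n) → ℝ
  | [] => fun S => if S = ∅ then 1 else 0
  | ab :: L => fun S => ∑ j ∈ S, ab.1 j * Pp L (S.erase j)

lemma Pp_card {L : List ((Fin n → ℝ) × ℝ)} {S : Finset (Fin n)} (h : Pp L S ≠ 0) :
    S.card = L.length := by
  classical
  induction L generalizing S with
  | nil =>
    by_cases hS : S = ∅
    · subst hS; simp
    · exfalso; apply h; simp [Pp, hS]
  | cons ab L ih =>
    simp only [Pp] at h
    obtain ⟨j, hj, hne⟩ := Finset.exists_ne_zero_of_sum_ne_zero h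
    have h2 : Pp L (S.erase j) ≠ 0 := right_ne_zero_of_mul hne
    have h3 := ih h2
    rw [Finset.card_erase_of_mem hj] at h3
    have : 1 ≤ S.card := Finset.card_pos.mpr ⟨j, hj⟩
    simp only [List.length_cons]
    omega

lemma key (L : List ((Fin n → ℝ) × ℝ)) :
    ∀ S : Finset (Fin n), L.length ≤ S.card →
    ∑ x : Fin n → Bool,
      (L.map (fun ab => (∑ j, ab.1 j * phi x j) + ab.2)).prod * ∏ j ∈ S, phi x j
    = if S.card = L.length then 2 ^ n * Pp L S else 0 := by
  classical
  induction L with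
  | nil =>
    intro S hS
    simp only [List.map_nil, List.prod_nil, one_mul, List.length_nil]
    by_cases h : S = ∅
    · subst h
      simp only [Finset.prod_empty, Finset.card_empty, if_pos rfl, Pp, if_pos rfl, mul_one]
      rw [Finset.sum_const, Finset.card_univ]
      simp [Fintype.card_fun]
    · rw [sum_phi_prod S (Finset.nonempty_of_ne_empty h),
        if_neg (by simpa [Finset.card_eq_zero] using h)]
  | cons ab L ih =>
    intro S hS
    simp only [List.map_cons, List.prod_cons, List.length_cons] at hS ⊢
    set F : (Fin n → Bool) → ℝ :=
      fun x => (L.map (fun ab => (∑ j, ab.1 j * phi x j) + ab.2)).prod with hF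
    have hSne : L.length + 1 ≤ S.card := hS
    -- expand each summand
    have hexp : ∀ x : Fin n → Bool,
        ((∑ j, ab.1 j * phi x j) + ab.2) * F x * ∏ j ∈ S, phi x j
        = (∑ j, ab.1 j * (F x * (phi x j * ∏ l ∈ S, phi x l)))
          + ab.2 * (F x * ∏ j ∈ S, phi x j) := by
      intro x
      rw [add_mul, add_mul, Finset.sum_mul, Finset.sum_mul]
      congr 1
      · refine Finset.sum_congr rfl fun j _ => by ring
      · ring
    rw [Finset.sum_congr rfl fun x _ => hexp x, Finset.sum_add_distrib]
    -- the b-term vanishes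
    have hb : ∑ x : Fin n → Bool, ab.2 * (F x * ∏ j ∈ S, phi x j) = 0 := by
      rw [← Finset.mul_sum, ih S (by omega), if_neg (by omega), mul_zero]
    rw [hb, add_zero, Finset.sum_comm]
    -- value of the inner sum for each coordinate j
    have hA : ∀ j : Fin n,
        ∑ x : Fin n → Bool, ab.1 j * (F x * (phi x j * ∏ l ∈ S, phi x l))
        = ab.1 j * (if j ∈ S then
            (if (S.erase j).card = L.length then 2 ^ n * Pp L (S.erase j) else 0) else 0) := by
      intro j
      rw [← Finset.mul_sum]
      congr 1
      by_cases hj : j ∈ S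
      · have hchi : ∀ x : Fin n → Bool, phi x j * ∏ l ∈ S, phi x l
            = ∏ l ∈ S.erase j, phi x l := by
          intro x
          rw [← Finset.mul_prod_erase S _ hj, ← mul_assoc, phi_mul_self, one_mul]
        rw [if_pos hj, Finset.sum_congr rfl fun x _ => by rw [hchi x]]
        exact ih (S.erase j) (by rw [Finset.card_erase_of_mem hj]; omega)
      · have hchi : ∀ x : Fin n → Bool, phi x j * ∏ l ∈ S, phi x l
            = ∏ l ∈ insert j S, phi x l := by
          intro x
          rw [Finset.prod_insert hj]
        rw [if_neg hj, Finset.sum_congr rfl fun x _ => by rw [hchi x]]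
        rw [ih (insert j S) (by rw [Finset.card_insert_of_notMem hj]; omega),
          if_neg (by rw [Finset.card_insert_of_notMem hj]; omega)]
    rw [Finset.sum_congr rfl fun j _ => hA j]
    by_cases hc : S.card = L.length + 1
    · rw [if_pos hc]
      have hterm : ∀ j ∈ Finset.univ \ S,
          ab.1 j * (if j ∈ S then
            (if (S.erase j).card = L.length then 2 ^ n * Pp L (S.erase j) else 0) else 0) = 0 := by
        intro j hj
        rw [if_neg (by simpa using (Finset.mem_sdiff.mp hj).2), mul_zero]
      rw [← Finset.sum_subset (Finset.subset_univ S) (fun j _ hj =>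
        hterm j (Finset.mem_sdiff.mpr ⟨Finset.mem_univ j, hj⟩))]
      have : ∀ j ∈ S,
          ab.1 j * (if j ∈ S then
            (if (S.erase j).card = L.length then 2 ^ n * Pp L (S.erase j) else 0) else 0)
          = 2 ^ n * (ab.1 j * Pp L (S.erase j)) := by
        intro j hj
        rw [if_pos hj, if_pos (by rw [Finset.card_erase_of_mem hj]; omega)]
        ring
      rw [Finset.sum_congr rfl this, ← Finset.mul_sum]
      rfl
    · rw [if_neg hc]
      refine Finset.sum_eq_zero fun j _ => ?_
      by_cases hj : j ∈ S
      · rw [if_pos hj, if_neg (by rw [Finset.card_erase_of_mem hj]; omega), mul_zero]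
      · rw [if_neg hj, mul_zero]

def Uop (W : Finset (Fin n) → ℝ) (S : Finset (Fin n)) : ℝ := ∑ j ∈ S, W (S.erase j)

def Dop (W : Finset (Fin n) → ℝ) (S : Finset (Fin n)) : ℝ := ∑ j ∈ Sᶜ, W (insert j S)

lemma adj (W X : Finset (Fin n) → ℝ) :
    ∑ S : Finset (Fin n), Uop W S * X S = ∑ S : Finset (Fin n), W S * Dop X S := by
  classical
  unfold Uop Dop
  simp_rw [Finset.sum_mul, Finset.mul_sum]
  rw [Finset.sum_sigma' Finset.univ (fun S => S), Finset.sum_sigma' Finset.univ (fun S => Sᶜ)]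
  refine Finset.sum_nbij' (fun p => ⟨p.1.erase p.2, p.2⟩) (fun p => ⟨insert p.2 p.1, p.2⟩)
    ?_ ?_ ?_ ?_ ?_
  · rintro ⟨S, j⟩ hp
    simp only [Finset.mem_sigma, Finset.mem_univ, true_and] at hp ⊢
    simp [Finset.notMem_erase]
  · rintro ⟨T, j⟩ hp
    simp only [Finset.mem_sigma, Finset.mem_univ, true_and, Finset.mem_compl] at hp ⊢
    simp
  · rintro ⟨S, j⟩ hp
    simp only [Finset.mem_sigma, Finset.mem_univ, true_and] at hp
    simp only [Sigma.mk.inj_iff, heq_eq_eq, and_true]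
    exact Finset.insert_erase hp
  · rintro ⟨T, j⟩ hp
    simp only [Finset.mem_sigma, Finset.mem_univ, true_and, Finset.mem_compl] at hp
    simp only [Sigma.mk.inj_iff, heq_eq_eq, and_true]
    exact Finset.erase_insert hp
  · rintro ⟨S, j⟩ hp
    simp only [Finset.mem_sigma, Finset.mem_univ, true_and] at hp
    simp only []
    rw [Finset.insert_erase hp]

lemma comm_DU (W : Finset (Fin n) → ℝ) (S : Finset (Fin n)) :
    Dop (Uop W) S = Uop (Dop W) S + ((Sᶜ.card : ℝ) - (S.card : ℝ)) * W S := by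
  classical
  unfold Uop Dop
  have h1 : ∀ j ∈ Sᶜ, ∑ l ∈ insert j S, W ((insert j S).erase l)
      = W S + ∑ l ∈ S, W (insert j (S.erase l)) := by
    intro j hj
    have hj' : j ∉ S := Finset.mem_compl.mp hj
    rw [Finset.sum_insert hj', Finset.erase_insert hj']
    congr 1
    refine Finset.sum_congr rfl fun l hl => ?_
    congr 1
    exact Finset.erase_insert_of_ne (fun h => hj' (h ▸ hl))
  have h2 : ∀ l ∈ S, ∑ j ∈ (S.erase l)ᶜ, W (insert j (S.erase l))
      = W S + ∑ j ∈ Sᶜ, W (insert j (S.erase l)) := by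
    intro l hl
    have hcompl : (S.erase l)ᶜ = insert l Sᶜ := by
      ext m
      simp only [Finset.mem_compl, Finset.mem_erase, Finset.mem_insert]
      by_cases hm : m = l <;> simp [hm]
    rw [hcompl, Finset.sum_insert (by simp [hl]), Finset.insert_erase hl]
  rw [Finset.sum_congr rfl h1, Finset.sum_congr rfl h2, Finset.sum_add_distrib,
    Finset.sum_add_distrib, Finset.sum_const, Finset.sum_const, Finset.sum_comm]
  simp only [nsmul_eq_mul]
  ring

lemma U_inj {d : ℕ} (h2d : 2 * d < n) (W : Finset (Fin n) → ℝ)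
    (hsupp : ∀ S, W S ≠ 0 → S.card = d) (hU : ∀ S, Uop W S = 0) : ∀ S, W S = 0 := by
  classical
  have h0 : ∑ S : Finset (Fin n), Uop W S * Uop W S = 0 := by
    refine Finset.sum_eq_zero fun S _ => by rw [hU S, mul_zero]
  rw [adj W (Uop W)] at h0
  have h1 : ∀ S : Finset (Fin n), W S * Dop (Uop W) S
      = W S * Uop (Dop W) S + ((Sᶜ.card : ℝ) - (S.card : ℝ)) * (W S * W S) := by
    intro S; rw [comm_DU]; ring
  rw [Finset.sum_congr rfl fun S _ => h1 S, Finset.sum_add_distrib] at h0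
  have h2 : ∑ S : Finset (Fin n), W S * Uop (Dop W) S
      = ∑ S : Finset (Fin n), Dop W S * Dop W S := by
    rw [← adj (Dop W) W]
    exact Finset.sum_congr rfl fun S _ => mul_comm _ _
  rw [h2] at h0
  have hc : ∀ S : Finset (Fin n), ((Sᶜ.card : ℝ) - (S.card : ℝ)) * (W S * W S)
      = ((n : ℝ) - 2 * d) * (W S * W S) := by
    intro S
    by_cases hW : W S = 0
    · rw [hW]; ring
    · have hcard := hsupp S hW
      have hle : S.card ≤ n := le_trans (Finset.card_le_univ S) (by simp)
      rw [Finset.card_compl, hcard]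
      simp only [Fintype.card_fin]
      rw [Nat.cast_sub (hcard ▸ hle)]
      push_cast
      ring
  rw [Finset.sum_congr rfl fun S _ => hc S, ← Finset.mul_sum] at h0
  have hD : (0:ℝ) ≤ ∑ S : Finset (Fin n), Dop W S * Dop W S :=
    Finset.sum_nonneg fun S _ => mul_self_nonneg _
  have hpos : (0:ℝ) < (n : ℝ) - 2 * d := by
    have : (2 * d : ℕ) < n := h2d
    have := Nat.cast_lt (α := ℝ) |>.mpr this
    push_cast at this ⊢
    linarith
  have hsq : ∑ S : Finset (Fin n), W S * W S ≤ 0 := by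
    nlinarith [hD, h0, hpos]
  intro S
  have := (Finset.sum_eq_zero_iff_of_nonneg
    (fun T (_ : T ∈ Finset.univ) => mul_self_nonneg (W T))).mp
    (le_antisymm hsq (Finset.sum_nonneg fun T _ => mul_self_nonneg _)) S (Finset.mem_univ S)
  exact mul_self_eq_zero.mp this

lemma Pp_ne_zero (L : List ((Fin n → ℝ) × ℝ))
    (hL : ∀ ab ∈ L, ∀ j, ab.1 j ≠ 0) (hlen : 2 * L.length ≤ n + 1) :
    ∃ S, Pp L S ≠ 0 := by
  classical
  induction L with
  | nil => exact ⟨∅, by simp [Pp]⟩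
  | cons ab L ih =>
    simp only [List.length_cons] at hlen
    obtain ⟨S0, hS0⟩ := ih (fun c hc => hL c (List.mem_cons_of_mem _ hc)) (by omega)
    by_contra hcon
    push_neg at hcon
    have ha : ∀ j, ab.1 j ≠ 0 := hL ab List.mem_cons_self
    -- rescaled coefficient function
    set W' : Finset (Fin n) → ℝ := fun S => (∏ j ∈ S, (ab.1 j)⁻¹) * Pp L S with hW'
    have hUW' : ∀ S, Uop W' S = 0 := by
      intro S
      unfold Uop
      have hterm : ∀ j ∈ S, W' (S.erase j)
          = (∏ l ∈ S, (ab.1 l)⁻¹) * (ab.1 j * Pp L (S.erase j)) := by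
        intro j hj
        simp only [hW']
        rw [← Finset.mul_prod_erase S (fun l => (ab.1 l)⁻¹) hj]
        have h1 : (ab.1 j)⁻¹ * ab.1 j = 1 := inv_mul_cancel₀ (ha j)
        calc (∏ l ∈ S.erase j, (ab.1 l)⁻¹) * Pp L (S.erase j)
            = ((ab.1 j)⁻¹ * ab.1 j) *
              ((∏ l ∈ S.erase j, (ab.1 l)⁻¹) * Pp L (S.erase j)) := by rw [h1, one_mul]
          _ = ((ab.1 j)⁻¹ * ∏ x ∈ S.erase j, (ab.1 x)⁻¹) *
              (ab.1 j * Pp L (S.erase j)) := by ring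
      rw [Finset.sum_congr rfl hterm, ← Finset.mul_sum]
      have := hcon S
      simp only [Pp] at this
      rw [this, mul_zero]
    have hsupp : ∀ S, W' S ≠ 0 → S.card = L.length := by
      intro S hS
      refine Pp_card (fun h => hS ?_)
      simp only [hW', h, mul_zero]
    have h2d : 2 * L.length < n := by omega
    have := U_inj h2d W' hsupp hUW' S0
    simp only [hW'] at this
    rcases mul_eq_zero.mp this with h | h
    · exact (Finset.prod_ne_zero_iff.mpr fun j _ => inv_ne_zero (ha j)) h
    · exact hS0 h

end SkewCover

theorem skewed_hyperplane_cover_lower_bound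
    (n k : ℕ) (hn : 2 ≤ n)
    (a : Fin (k + 1) → Fin n → ℝ) (b : Fin (k + 1) → ℝ)
    (hskew : ∀ i j, a i j ≠ 0)
    (hcover : ∀ x : Fin n → ℝ, (∀ j, x j = 1 ∨ x j = -1) →
      ∃ i, (∑ j, a i j * x j) + b i = 0) :
    (n : ℝ) / 2 ≤ k := by
  classical
  open SkewCover in
  by_contra hcon
  push_neg at hcon
  have hnk : 2 * (k + 1) ≤ n + 1 := by
    have h1 : (2 * k : ℝ) < n := by linarith
    have h2 : 2 * k < n := by exact_mod_cast h1
    omega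
  set L : List ((Fin n → ℝ) × ℝ) := List.ofFn (fun i : Fin (k + 1) => (a i, b i)) with hL
  have hlen : L.length = k + 1 := by simp [hL]
  have hent : ∀ ab ∈ L, ∀ j, ab.1 j ≠ 0 := by
    intro ab hab j
    rw [hL, List.mem_ofFn] at hab
    obtain ⟨i, hi⟩ := hab
    rw [← hi]
    exact hskew i j
  obtain ⟨S, hS⟩ := Pp_ne_zero L hent (by rw [hlen]; exact hnk)
  have hcard : S.card = L.length := Pp_card hS
  have hkey := key L S (le_of_eq hcard.symm)
  rw [if_pos hcard] at hkey
  have hzero : ∑ x : Fin n → Bool,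
      (L.map (fun ab => (∑ j, ab.1 j * phi x j) + ab.2)).prod * ∏ j ∈ S, phi x j = 0 := by
    refine Finset.sum_eq_zero fun x _ => ?_
    obtain ⟨i, hi⟩ := hcover (phi x) (fun j => phi_pm x j)
    have hmem : ((∑ j, a i j * phi x j) + b i) ∈
        L.map (fun ab => (∑ j, ab.1 j * phi x j) + ab.2) := by
      refine List.mem_map.mpr ⟨(a i, b i), ?_, rfl⟩
      rw [hL, List.mem_ofFn]
      exact ⟨i, rfl⟩
    rw [List.prod_eq_zero (hi ▸ hmem), zero_mul]
  rw [hzero] at hkey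
  have : (2:ℝ) ^ n * Pp L S ≠ 0 :=
    mul_ne_zero (by positivity) hS
  exact this hkey.symm
end

section
/- Let p be a polynomial on R^n with deg(p) < n/2, and suppose there exist a1,...,an, b with all ai ≠ 0 such that p(x) = 0 for every x ∈ {-1,1}^n not satisfying a1x1+...+anxn+b = 0 (i.e., the support of p on the hypercube lies in a skewed hyperplane). Then p(x) = 0 for all x ∈ {-1,1}^n. -/
/-!
Suppose `p(x) ≠ 0` at a vertex `x` of the cube; then `x` lies on the hyperplane `⟨a, x⟩ + b = 0`.
Split the coordinates by the sign of `aᵢxᵢ`; one class `T` has more than `n / 2 > deg p` elements.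
Flipping the signs of `x` on a nonempty `S ⊆ T` moves `⟨a, x⟩` by `-2 ∑_{i ∈ S} aᵢxᵢ ≠ 0`, so every
such flip leaves the hyperplane and `p` vanishes there. But the alternating sum of `p` over all sign
flips inside `T` is a `|T|`-th order finite difference, which kills every polynomial of degree
`< |T|`; hence `p(x) = 0` too.
-/

open Finset MvPolynomial

lemma Finsupp.exists_mem_eq_zero_of_degree_lt_card {σ : Type*} [Fintype σ] {d : σ →₀ ℕ}
    {T : Finset σ} (h : d.degree < #T) : ∃ i ∈ T, d i = 0 := by
  by_contra! hT
  have : #T ≤ d.degree := calc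
    #T = ∑ _i ∈ T, 1 := card_eq_sum_ones T
    _ ≤ ∑ i ∈ T, d i := Finset.sum_le_sum fun i hi => Nat.one_le_iff_ne_zero.mpr (hT i hi)
    _ ≤ ∑ i, d i := sum_le_sum_of_subset (subset_univ T)
    _ = d.degree := (Finsupp.degree_eq_sum d).symm
  omega

section SignFlips

variable {σ R : Type*} [DecidableEq σ] [CommRing R]

lemma piecewise_neg_eq_one_or_eq_neg_one {x : σ → R} (hx : ∀ i, x i = 1 ∨ x i = -1)
    (S : Finset σ) (i : σ) : S.piecewise (-x) x i = 1 ∨ S.piecewise (-x) x i = -1 := by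
  by_cases hi : i ∈ S
  · rcases hx i with h | h <;> simp [hi, h]
  · simpa [hi] using hx i

variable [Fintype σ]

lemma prod_piecewise_neg_pow (S : Finset σ) (x : σ → R) (d : σ →₀ ℕ) :
    ∏ i, S.piecewise (-x) x i ^ d i = (∏ i ∈ S, (-1) ^ d i) * ∏ i, x i ^ d i := by
  have hflip : ∀ i, S.piecewise (-x) x i ^ d i = (if i ∈ S then (-1) ^ d i else 1) * x i ^ d i := by
    intro i
    by_cases hi : i ∈ S
    · rw [piecewise_eq_of_mem _ _ _ hi, Pi.neg_apply, neg_pow, if_pos hi]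
    · rw [piecewise_eq_of_notMem _ _ _ hi, if_neg hi, one_mul]
  simp_rw [hflip, prod_mul_distrib, prod_ite_mem, univ_inter]

lemma sum_powerset_neg_one_pow_mul_prod_piecewise_neg_pow (T : Finset σ) (x : σ → R)
    {d : σ →₀ ℕ} {i₀ : σ} (hi₀ : i₀ ∈ T) (hd : d i₀ = 0) :
    ∑ S ∈ T.powerset, (-1) ^ #S * ∏ i, S.piecewise (-x) x i ^ d i = 0 := by
  have hsign : ∀ S : Finset σ, (-1 : R) ^ #S * ∏ i ∈ S, (-1) ^ d i = ∏ i ∈ S, -(-1) ^ d i := by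
    intro S
    rw [← prod_const, ← prod_mul_distrib]
    simp_rw [neg_one_mul]
  simp_rw [prod_piecewise_neg_pow, ← mul_assoc, hsign, ← sum_mul, ← prod_one_add]
  rw [prod_eq_zero hi₀ (by simp [hd]), zero_mul]

theorem MvPolynomial.sum_powerset_neg_one_pow_mul_eval_piecewise_neg (p : MvPolynomial σ R)
    (x : σ → R) {T : Finset σ} (hT : p.totalDegree < #T) :
    ∑ S ∈ T.powerset, (-1) ^ #S * eval (S.piecewise (-x) x) p = 0 := by
  simp_rw [eval_eq', mul_sum]
  rw [sum_comm]
  refine sum_eq_zero fun d hd => ?_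
  obtain ⟨i₀, hi₀, hdi₀⟩ :=
    Finsupp.exists_mem_eq_zero_of_degree_lt_card ((le_totalDegree hd).trans_lt hT)
  simp_rw [mul_left_comm _ (coeff d p), ← mul_sum]
  rw [sum_powerset_neg_one_pow_mul_prod_piecewise_neg_pow T x hi₀ hdi₀, mul_zero]

theorem MvPolynomial.eval_eq_zero_of_eval_piecewise_neg_eq_zero {p : MvPolynomial σ R}
    {x : σ → R} {T : Finset σ} (hT : p.totalDegree < #T)
    (h : ∀ S ⊆ T, S.Nonempty → eval (S.piecewise (-x) x) p = 0) : eval x p = 0 := by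
  have hsum := p.sum_powerset_neg_one_pow_mul_eval_piecewise_neg x hT
  rwa [sum_eq_single_of_mem ∅ (empty_mem_powerset T) fun S hS hS₀ => by
    rw [h S (mem_powerset.mp hS) (nonempty_iff_ne_empty.mpr hS₀), mul_zero],
    piecewise_empty, card_empty, pow_zero, one_mul] at hsum

lemma sum_mul_piecewise_neg (a x : σ → R) (S : Finset σ) :
    ∑ i, a i * S.piecewise (-x) x i = ∑ i, a i * x i - 2 * ∑ i ∈ S, a i * x i := by
  have hflip : ∀ i,
      a i * S.piecewise (-x) x i = a i * x i - if i ∈ S then 2 * (a i * x i) else 0 := by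
    intro i
    by_cases hi : i ∈ S
    · simp only [hi, piecewise_eq_of_mem, Pi.neg_apply, if_true]
      ring
    · simp [hi]
  simp_rw [hflip, sum_sub_distrib, sum_ite_mem, univ_inter, mul_sum]

end SignFlips

lemma exists_card_le_two_mul_card_forall_sum_ne_zero {σ M : Type*} [Fintype σ]
    [AddCommMonoid M] [LinearOrder M] [IsOrderedCancelAddMonoid M] {v : σ → M}
    (hv : ∀ i, v i ≠ 0) :
    ∃ T : Finset σ, Fintype.card σ ≤ 2 * #T ∧ ∀ S ⊆ T, S.Nonempty → ∑ i ∈ S, v i ≠ 0 := by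
  classical
  set P := univ.filter fun i => 0 < v i
  set N := univ.filter fun i => ¬0 < v i
  have hcard : #P + #N = Fintype.card σ := card_filter_add_card_filter_not _
  rcases le_total #N #P with hNP | hPN
  · refine ⟨P, by omega, fun S hS hne => (sum_pos (fun i hi => ?_) hne).ne'⟩
    exact (mem_filter.mp (hS hi)).2
  · refine ⟨N, by omega, fun S hS hne => (sum_neg (fun i hi => ?_) hne).ne⟩
    exact lt_of_le_of_ne (not_lt.mp (mem_filter.mp (hS hi)).2) (hv i)

theorem support_in_skewed_hyperplane_implies_vanishing_general
    (n : ℕ) (p : MvPolynomial (Fin n) ℝ)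
    (hdeg : (p.totalDegree : ℝ) < n / 2)
    (a : Fin n → ℝ) (b : ℝ) (ha : ∀ i, a i ≠ 0)
    (hsupp : ∀ x : Fin n → ℝ, (∀ i, x i = 1 ∨ x i = -1) →
      (∑ i, a i * x i) + b ≠ 0 → MvPolynomial.eval x p = 0) :
    ∀ x : Fin n → ℝ, (∀ i, x i = 1 ∨ x i = -1) → MvPolynomial.eval x p = 0 := by
  intro x hx
  by_contra hpx
  have hplane : ∑ i, a i * x i + b = 0 := not_not.mp fun h => hpx (hsupp x hx h)
  have hx₀ : ∀ i, x i ≠ 0 := fun i => by rcases hx i with h | h <;> simp [h]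
  obtain ⟨T, hcard, hT⟩ :=
    exists_card_le_two_mul_card_forall_sum_ne_zero fun i => mul_ne_zero (ha i) (hx₀ i)
  have hdegT : p.totalDegree < #T := by
    rw [Fintype.card_fin] at hcard
    have : (2 * p.totalDegree : ℝ) < n := by linarith
    have : 2 * p.totalDegree < n := by exact_mod_cast this
    omega
  refine hpx (eval_eq_zero_of_eval_piecewise_neg_eq_zero hdegT fun S hS hne =>
    hsupp _ (piecewise_neg_eq_one_or_eq_neg_one hx S) ?_)
  rw [sum_mul_piecewise_neg]
  intro h
  exact hT S hS hne (by linarith)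

theorem support_in_skewed_hyperplane_implies_vanishing
    (n : ℕ) (hn : 1 ≤ n) (p : MvPolynomial (Fin n) ℝ)
    (hdeg : (p.totalDegree : ℝ) < n / 2)
    (a : Fin n → ℝ) (b : ℝ) (ha : ∀ i, a i ≠ 0)
    (hsupp : ∀ x : Fin n → ℝ, (∀ i, x i = 1 ∨ x i = -1) →
      (∑ i, a i * x i) + b ≠ 0 → MvPolynomial.eval x p = 0) :
    ∀ x : Fin n → ℝ, (∀ i, x i = 1 ∨ x i = -1) → MvPolynomial.eval x p = 0 :=
  support_in_skewed_hyperplane_implies_vanishing_general n p hdeg a b ha hsupp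
end

section
/- Let n ≥ 2d+1 and let a1,...,an be nonzero reals. Suppose real numbers c_S, indexed by subsets S ⊆ [n] with |S| = d, satisfy sum_{j ∈ T} a_j c_{T\{j}} = 0 for every subset T ⊆ [n] with |T| = d+1. Then c_S = 0 for all S. -/
open Finset

lemma pair_swap_sum {α : Type*} [Fintype α] [DecidableEq α] (m : ℕ)
    (f : Finset α → α → ℝ) :
    ∑ S ∈ Finset.powersetCard (m + 1) (Finset.univ : Finset α), ∑ k ∈ S, f S k
      = ∑ R ∈ Finset.powersetCard m (Finset.univ : Finset α), ∑ j ∈ Rᶜ, f (insert j R) j := by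
  rw [Finset.sum_sigma', Finset.sum_sigma']
  refine Finset.sum_nbij' (fun p => ⟨p.1.erase p.2, p.2⟩) (fun p => ⟨insert p.2 p.1, p.2⟩)
    ?_ ?_ ?_ ?_ ?_
  · rintro ⟨S, k⟩ hp
    simp only [Finset.mem_sigma, Finset.mem_powersetCard] at hp ⊢
    obtain ⟨⟨-, hcard⟩, hk⟩ := hp
    refine ⟨⟨Finset.subset_univ _, ?_⟩, ?_⟩
    · rw [Finset.card_erase_of_mem hk, hcard]; omega
    · simp
  · rintro ⟨R, j⟩ hp
    simp only [Finset.mem_sigma, Finset.mem_powersetCard, Finset.mem_compl] at hp ⊢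
    obtain ⟨⟨-, hcard⟩, hj⟩ := hp
    exact ⟨⟨Finset.subset_univ _, by rw [Finset.card_insert_of_notMem hj, hcard]⟩,
      Finset.mem_insert_self _ _⟩
  · rintro ⟨S, k⟩ hp
    simp only [Finset.mem_sigma, Finset.mem_powersetCard] at hp
    simp [Finset.insert_erase hp.2]
  · rintro ⟨R, j⟩ hp
    simp only [Finset.mem_sigma, Finset.mem_powersetCard, Finset.mem_compl] at hp
    simp [Finset.erase_insert hp.2]
  · rintro ⟨S, k⟩ hp
    simp only [Finset.mem_sigma, Finset.mem_powersetCard] at hp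
    simp [Finset.insert_erase hp.2]

theorem kernel_trivial_of_skew_system
    (n d : ℕ) (hd : 1 ≤ d) (hn : 2 * d + 1 ≤ n)
    (a : Fin n → ℝ) (ha : ∀ i, a i ≠ 0)
    (c : Finset (Fin n) → ℝ)
    (hsys : ∀ T : Finset (Fin n), T.card = d + 1 →
      (∑ j ∈ T, a j * c (T.erase j)) = 0) :
    ∀ S : Finset (Fin n), S.card = d → c S = 0 := by
  classical
  set μ : Finset (Fin n) → ℝ := fun S => ∏ i ∈ S, ((a i)⁻¹) ^ 2 with hμdef
  have hμpos : ∀ S : Finset (Fin n), 0 < μ S := by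
    intro S
    refine Finset.prod_pos fun i _ => ?_
    have hi : (a i)⁻¹ ≠ 0 := inv_ne_zero (ha i)
    positivity
  set g : Finset (Fin n) → ℝ := fun R => ∑ j ∈ Rᶜ, (a j)⁻¹ * c (insert j R) with hgdef
  have hdn : d ≤ n := by omega
  -- Step A : pointwise identity
  have hA : ∀ S : Finset (Fin n), S.card = d →
      ∑ k ∈ S, a k * g (S.erase k) = ((2 * d : ℝ) - n) * c S := by
    intro S hS
    have hcompl : (Sᶜ).card = n - d := by
      rw [Finset.card_compl, hS, Fintype.card_fin]
    -- expansion of the system equations over insert j S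
    have expand : ∀ j ∈ Sᶜ,
        a j * c S + ∑ k ∈ S, a k * c (insert j (S.erase k)) = 0 := by
      intro j hj
      have hjS : j ∉ S := Finset.mem_compl.mp hj
      have h0 := hsys (insert j S) (by rw [Finset.card_insert_of_notMem hjS, hS])
      rw [Finset.sum_insert hjS, Finset.erase_insert hjS] at h0
      rw [← h0]
      congr 1
      refine Finset.sum_congr rfl fun k hk => ?_
      rw [Finset.erase_insert_of_ne (by rintro rfl; exact hjS hk)]
    -- cross term
    have hX : ∑ j ∈ Sᶜ, ∑ k ∈ S, (a j)⁻¹ * (a k * c (insert j (S.erase k)))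
        = -(((n : ℝ) - d) * c S) := by
      have hterm : ∀ j ∈ Sᶜ,
          ∑ k ∈ S, (a j)⁻¹ * (a k * c (insert j (S.erase k))) = -c S := by
        intro j hj
        have h0 := expand j hj
        have hsum : ∑ k ∈ S, a k * c (insert j (S.erase k)) = -(a j * c S) := by
          linarith
        rw [← Finset.mul_sum, hsum, mul_neg, ← mul_assoc, inv_mul_cancel₀ (ha j), one_mul]
      rw [Finset.sum_congr rfl hterm, Finset.sum_const, hcompl, nsmul_eq_mul]
      have : ((n - d : ℕ) : ℝ) = (n : ℝ) - d := by
        push_cast [hdn]; ring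
      rw [this]; ring
    -- expand the left-hand side
    have hLHS : ∑ k ∈ S, a k * g (S.erase k)
        = (d : ℝ) * c S
          + ∑ k ∈ S, ∑ j ∈ Sᶜ, a k * ((a j)⁻¹ * c (insert j (S.erase k))) := by
      have hterm : ∀ k ∈ S, a k * g (S.erase k)
          = c S + ∑ j ∈ Sᶜ, a k * ((a j)⁻¹ * c (insert j (S.erase k))) := by
        intro k hk
        have hkc : k ∉ Sᶜ := by simp [hk]
        have hcomp : (S.erase k)ᶜ = insert k Sᶜ := by
          rw [Finset.compl_erase]
        rw [hgdef]
        simp only []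
        rw [hcomp, Finset.sum_insert hkc, Finset.insert_erase hk, mul_add,
          ← mul_assoc, mul_inv_cancel₀ (ha k), one_mul, Finset.mul_sum]
      rw [Finset.sum_congr rfl hterm, Finset.sum_add_distrib, Finset.sum_const, hS,
        nsmul_eq_mul]
    rw [hLHS]
    rw [Finset.sum_comm]
    have : ∑ j ∈ Sᶜ, ∑ k ∈ S, a k * ((a j)⁻¹ * c (insert j (S.erase k)))
        = ∑ j ∈ Sᶜ, ∑ k ∈ S, (a j)⁻¹ * (a k * c (insert j (S.erase k))) := by
      refine Finset.sum_congr rfl fun j _ => Finset.sum_congr rfl fun k _ => by ring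
    rw [this, hX]
    ring
  -- Step B : global sum
  have hd1 : d - 1 + 1 = d := Nat.succ_pred_eq_of_pos hd
  set Q : ℝ := ∑ S ∈ Finset.powersetCard d Finset.univ,
      ∑ k ∈ S, μ S * c S * (a k * g (S.erase k)) with hQdef
  have hQ1 : Q = ((2 * d : ℝ) - n) * ∑ S ∈ Finset.powersetCard d Finset.univ, μ S * c S ^ 2 := by
    rw [hQdef, Finset.mul_sum]
    refine Finset.sum_congr rfl fun S hS => ?_
    have hScard : S.card = d := (Finset.mem_powersetCard.mp hS).2
    calc ∑ k ∈ S, μ S * c S * (a k * g (S.erase k))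
        = μ S * c S * ∑ k ∈ S, a k * g (S.erase k) := by rw [Finset.mul_sum]
      _ = μ S * c S * (((2 * d : ℝ) - n) * c S) := by rw [hA S hScard]
      _ = ((2 * d : ℝ) - n) * (μ S * c S ^ 2) := by ring
  have hQ2 : Q = ∑ R ∈ Finset.powersetCard (d - 1) Finset.univ, μ R * g R ^ 2 := by
    rw [hQdef]
    have hswap := pair_swap_sum (α := Fin n) (d - 1)
      (fun S k => μ S * c S * (a k * g (S.erase k)))
    rw [hd1] at hswap
    rw [hswap]
    refine Finset.sum_congr rfl fun R hR => ?_
    have hterm : ∀ j ∈ Rᶜ,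
        μ (insert j R) * c (insert j R) * (a j * g ((insert j R).erase j))
          = μ R * ((a j)⁻¹ * c (insert j R)) * g R := by
      intro j hj
      have hjR : j ∉ R := Finset.mem_compl.mp hj
      have hμins : μ (insert j R) = ((a j)⁻¹) ^ 2 * μ R := by
        rw [hμdef]; exact Finset.prod_insert hjR
      rw [hμins, Finset.erase_insert hjR]
      have haj : a j ≠ 0 := ha j
      field_simp
    rw [Finset.sum_congr rfl hterm]
    rw [← Finset.sum_mul, ← Finset.mul_sum]
    rw [hgdef]
    ring
  -- conclude
  have hsumnn : (0 : ℝ) ≤ ∑ S ∈ Finset.powersetCard d Finset.univ, μ S * c S ^ 2 :=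
    Finset.sum_nonneg fun S _ => mul_nonneg (hμpos S).le (sq_nonneg _)
  have hQnn : (0 : ℝ) ≤ Q := by
    rw [hQ2]
    exact Finset.sum_nonneg fun R _ => mul_nonneg (hμpos R).le (sq_nonneg _)
  have hcoef : ((2 * d : ℝ) - n) ≤ -1 := by
    have : ((2 * d + 1 : ℕ) : ℝ) ≤ (n : ℕ) := by exact_mod_cast hn
    push_cast at this
    linarith
  have hsum0 : ∑ S ∈ Finset.powersetCard d Finset.univ, μ S * c S ^ 2 = 0 := by
    by_contra hne
    have hpos : 0 < ∑ S ∈ Finset.powersetCard d Finset.univ, μ S * c S ^ 2 :=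
      lt_of_le_of_ne hsumnn (Ne.symm hne)
    have : Q < 0 := by
      rw [hQ1]
      have : ((2 * d : ℝ) - n) < 0 := by linarith
      exact mul_neg_of_neg_of_pos this hpos
    linarith
  intro S hS
  have hmem : S ∈ Finset.powersetCard d Finset.univ :=
    Finset.mem_powersetCard.mpr ⟨Finset.subset_univ S, hS⟩
  have hzero : μ S * c S ^ 2 = 0 :=
    (Finset.sum_eq_zero_iff_of_nonneg
      (fun S _ => mul_nonneg (hμpos S).le (sq_nonneg _))).mp hsum0 S hmem
  rcases mul_eq_zero.mp hzero with h | h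
  · exact absurd h (hμpos S).ne'
  · exact pow_eq_zero_iff (by norm_num) |>.mp h
end

section
/- Let a1,...,an be nonzero reals and let c_S ∈ R for all d-subsets S of [n]. Suppose that for any distinct indices i1,...,i_{d-1}, j, j' ∈ [n] we have c_{{i1,...,i_{d-1},j}}/a_j = c_{{i1,...,i_{d-1},j'}}/a_{j'}. Then there exists a constant K ∈ R such that c_S = K · prod_{i ∈ S} a_i for all d-subsets S of [n]. -/
open Finset

/- Normalise `c S` to `f S = c S / ∏ i ∈ S, a i`. The ratio condition makes `f`
invariant under exchanging one element of a `d`-set for another, and any two `d`-sets are joined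
by a chain of such exchanges (each one shrinks `S \ T`), so `f` is constant on `d`-sets. -/

namespace Finset

variable {α β : Type*} [DecidableEq α]

lemma card_sdiff_insert_erase_lt {s t : Finset α} {i j : α} (hi : i ∈ s \ t) (hj : j ∈ t) :
    #(insert j (s.erase i) \ t) < #(s \ t) := by
  have hsub : insert j (s.erase i) \ t ⊆ (s \ t).erase i := by
    intro x hx
    simp only [mem_sdiff, mem_insert, mem_erase] at hx ⊢
    rcases hx with ⟨rfl | hx, hxt⟩
    · exact absurd hj hxt
    · exact ⟨hx.1, hx.2, hxt⟩
  calc #(insert j (s.erase i) \ t) ≤ #((s \ t).erase i) := card_le_card hsub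
    _ < #(s \ t) := card_erase_lt_of_mem hi

lemma eq_of_exchange_invariant {d : ℕ} {f : Finset α → β}
    (hf : ∀ s : Finset α, #s = d → ∀ i ∈ s, ∀ j ∉ s, f (insert j (s.erase i)) = f s)
    {s t : Finset α} (hs : #s = d) (ht : #t = d) : f s = f t := by
  induction hk : #(s \ t) using Nat.strong_induction_on generalizing s with
  | _ k ih =>
    by_cases hst : s = t
    · rw [hst]
    obtain ⟨i, hi⟩ : (s \ t).Nonempty :=
      sdiff_nonempty.mpr fun h => hst (eq_of_subset_of_card_le h (by omega))
    obtain ⟨j, hj⟩ : (t \ s).Nonempty :=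
      sdiff_nonempty.mpr fun h => hst (eq_of_subset_of_card_le h (by omega)).symm
    have his : i ∈ s := (mem_sdiff.mp hi).1
    have hjs : j ∉ s := (mem_sdiff.mp hj).2
    have hcard : #(insert j (s.erase i)) = d := by
      rw [card_insert_of_notMem fun h => hjs (mem_of_mem_erase h), card_erase_of_mem his]
      have : 0 < #s := card_pos.mpr ⟨i, his⟩
      omega
    rw [← hf s hs i his j hjs]
    exact ih _ (hk ▸ card_sdiff_insert_erase_lt hi (mem_sdiff.mp hj).1) hcard rfl

end Finset

section RatioCondition

variable {α F : Type*} [DecidableEq α] [Field F] {d : ℕ} {a : α → F} {c : Finset α → F}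

lemma div_prod_insert_erase_eq
    (hratio : ∀ I : Finset α, #I = d - 1 → ∀ j j' : α, j ∉ I → j' ∉ I → j ≠ j' →
      c (insert j I) / a j = c (insert j' I) / a j')
    {s : Finset α} (hs : #s = d) {i j : α} (hi : i ∈ s) (hj : j ∉ s) :
    c (insert j (s.erase i)) / ∏ k ∈ insert j (s.erase i), a k = c s / ∏ k ∈ s, a k := by
  have hjI : j ∉ s.erase i := fun h => hj (mem_of_mem_erase h)
  have hij : i ≠ j := fun h => hj (h ▸ hi)
  have hrat := hratio (s.erase i) (by rw [card_erase_of_mem hi, hs]) i j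
    (notMem_erase i s) hjI hij
  rw [insert_erase hi] at hrat
  rw [prod_insert hjI, ← mul_prod_erase s a hi, ← div_div, ← div_div, hrat]

end RatioCondition

theorem ratio_condition_implies_product_form_general
    (n d : ℕ)
    (a : Fin n → ℝ) (ha : ∀ i, a i ≠ 0)
    (c : Finset (Fin n) → ℝ)
    (hratio : ∀ I : Finset (Fin n), I.card = d - 1 →
      ∀ j j' : Fin n, j ∉ I → j' ∉ I → j ≠ j' →
        c (insert j I) / a j = c (insert j' I) / a j') :
    ∃ K : ℝ, ∀ S : Finset (Fin n), S.card = d → c S = K * ∏ i ∈ S, a i := by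
  set f : Finset (Fin n) → ℝ := fun S => c S / ∏ i ∈ S, a i
  have hconst : ∀ S T : Finset (Fin n), #S = d → #T = d → f S = f T :=
    fun _ _ => eq_of_exchange_invariant fun _ hs _ hi _ hj =>
      div_prod_insert_erase_eq hratio hs hi hj
  by_cases hex : ∃ S₀ : Finset (Fin n), #S₀ = d
  · obtain ⟨S₀, hS₀⟩ := hex
    refine ⟨f S₀, fun S hS => ?_⟩
    rw [← hconst S S₀ hS hS₀, div_mul_cancel₀ _ (prod_ne_zero_iff.mpr fun i _ => ha i)]
  · exact ⟨0, fun S hS => absurd ⟨S, hS⟩ hex⟩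

theorem ratio_condition_implies_product_form
    (n d : ℕ) (hd : 1 ≤ d) (hn : d + 1 ≤ n)
    (a : Fin n → ℝ) (ha : ∀ i, a i ≠ 0)
    (c : Finset (Fin n) → ℝ)
    (hratio : ∀ I : Finset (Fin n), I.card = d - 1 →
      ∀ j j' : Fin n, j ∉ I → j' ∉ I → j ≠ j' →
        c (insert j I) / a j = c (insert j' I) / a j') :
    ∃ K : ℝ, ∀ S : Finset (Fin n), S.card = d → c S = K * ∏ i ∈ S, a i :=
  ratio_condition_implies_product_form_general n d a ha c hratio
end

section
/- Let f : {-1,1}^n → R be a multilinear polynomial of degree d ≤ n/2 - 1/2 (i.e., 2d+1 ≤ n). If f(x) = 0 for every x ∈ {-1,1}^n with an even number of coordinates equal to -1, then f ≡ 0 on {-1,1}^n. -/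
open Finset
open scoped symmDiff

namespace Vanish

variable {n : ℕ}

/-- sign of a boolean -/
def sgn (b : Bool) : ℝ := if b then -1 else 1

lemma sgn_sq (b : Bool) : sgn b * sgn b = 1 := by cases b <;> simp [sgn]

lemma sgn_not (b : Bool) : sgn (!b) = - sgn b := by cases b <;> simp [sgn]

/-- Walsh character -/
def chi (S : Finset (Fin n)) (σ : Fin n → Bool) : ℝ := ∏ j ∈ S, sgn (σ j)

def flip (σ : Fin n → Bool) (i : Fin n) : Fin n → Bool := Function.update σ i (!σ i)

lemma flip_involutive (i : Fin n) : Function.Involutive (fun σ => flip σ i) := by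
  intro σ
  funext j
  by_cases h : j = i
  · subst h; simp [flip, Function.update_self]
  · simp [flip, Function.update_of_ne h]

lemma chi_flip (S : Finset (Fin n)) (σ : Fin n → Bool) (i : Fin n) :
    chi S (flip σ i) = (if i ∈ S then -1 else 1) * chi S σ := by
  by_cases hi : i ∈ S
  · rw [if_pos hi]
    unfold chi
    rw [← Finset.mul_prod_erase S _ hi, ← Finset.mul_prod_erase S (fun j => sgn (σ j)) hi]
    have h1 : sgn (flip σ i i) = - sgn (σ i) := by
      simp [flip, Function.update_self, sgn_not]
    have h2 : ∀ j ∈ S.erase i, sgn (flip σ i j) = sgn (σ j) := by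
      intro j hj
      have : j ≠ i := Finset.ne_of_mem_erase hj
      simp [flip, Function.update_of_ne this]
    rw [Finset.prod_congr rfl h2, h1]
    ring
  · rw [if_neg hi, one_mul]
    unfold chi
    apply Finset.prod_congr rfl
    intro j hj
    have : j ≠ i := fun h => hi (h ▸ hj)
    simp [flip, Function.update_of_ne this]

lemma chi_mul (S T : Finset (Fin n)) (σ : Fin n → Bool) :
    chi S σ * chi T σ = chi (S ∆ T) σ := by
  unfold chi
  rw [← Finset.prod_union_inter]
  have hdisj : Disjoint (S ∆ T) (S ∩ T) := by
    simp [Finset.disjoint_left, Finset.mem_symmDiff, Finset.mem_inter]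
    tauto
  have hunion : S ∪ T = (S ∆ T) ∪ (S ∩ T) := by
    ext j; simp [Finset.mem_symmDiff, Finset.mem_union, Finset.mem_inter]; tauto
  rw [hunion, Finset.prod_union hdisj, mul_assoc, ← Finset.prod_mul_distrib]
  have : ∏ j ∈ S ∩ T, sgn (σ j) * sgn (σ j) = 1 :=
    Finset.prod_eq_one fun j _ => sgn_sq _
  rw [this, mul_one]

lemma orth (U : Finset (Fin n)) :
    ∑ σ : Fin n → Bool, chi U σ = if U = ∅ then (2:ℝ)^n else 0 := by
  by_cases hU : U = ∅
  · subst hU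
    simp [chi, Finset.card_univ]
  · rw [if_neg hU]
    obtain ⟨i, hi⟩ := Finset.nonempty_iff_ne_empty.2 hU
    have key : ∑ σ : Fin n → Bool, chi U σ = ∑ σ : Fin n → Bool, chi U (flip σ i) := by
      exact (Fintype.sum_equiv ((flip_involutive i).toPerm) _ _ (fun σ => rfl)).symm
    have key2 : ∀ σ : Fin n → Bool, chi U (flip σ i) = - chi U σ := by
      intro σ
      rw [chi_flip, if_pos hi]; ring
    rw [Finset.sum_congr rfl (fun σ _ => key2 σ)] at key
    simp only [Finset.sum_neg_distrib] at key
    linarith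

lemma sum_if_mem (S : Finset (Fin n)) :
    ∑ i : Fin n, (if i ∈ S then (-1:ℝ) else 1) = n - 2 * S.card := by
  rw [Finset.sum_ite]
  simp only [Finset.sum_const, nsmul_eq_mul, mul_one, mul_neg_one]
  have h1 : Finset.univ.filter (· ∈ S) = S := by simp
  have h2 : (Finset.univ.filter (¬ · ∈ S)).card = n - S.card := by
    rw [Finset.filter_not, Finset.card_sdiff_of_subset (by simp)]
    simp [h1]
  rw [h1, h2]
  have : S.card ≤ n := by simpa using Finset.card_le_card (Finset.subset_univ S)
  push_cast [this]
  ring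

lemma flip_parity (σ : Fin n → Bool) (i : Fin n)
    (h : ¬ Even (Finset.univ.filter fun j => σ j).card) :
    Even (Finset.univ.filter fun j => flip σ i j).card := by
  by_cases hi : σ i
  · have : (Finset.univ.filter fun j => flip σ i j) =
        (Finset.univ.filter fun j => σ j).erase i := by
      ext j
      by_cases hji : j = i
      · subst hji; simp [flip, Function.update_self, hi]
      · simp [flip, Finset.mem_filter, Function.update_apply, hji]
    rw [this, Finset.card_erase_of_mem (by simp [hi])]
    rcases Nat.not_even_iff_odd.1 h with ⟨k, hk⟩
    rw [hk]
    simp [Nat.add_sub_cancel]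
  · have : (Finset.univ.filter fun j => flip σ i j) =
        insert i (Finset.univ.filter fun j => σ j) := by
      ext j
      by_cases hji : j = i
      · subst hji; simp [flip, Function.update_self, hi]
      · simp [flip, Finset.mem_filter, Function.update_apply, hji]
    rw [this, Finset.card_insert_of_notMem (by simp [hi])]
    rcases Nat.not_even_iff_odd.1 h with ⟨k, hk⟩
    rw [hk]
    exact ⟨k + 1, by ring⟩


theorem main_aux (n d : ℕ) (hd : 2 * d + 1 ≤ n)
    (fhat : Finset (Fin n) → ℝ)
    (hdeg : ∀ S : Finset (Fin n), fhat S ≠ 0 → S.card ≤ d)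
    (hvanish : ∀ x : Fin n → ℝ, (∀ i, x i = 1 ∨ x i = -1) →
      Even (Finset.univ.filter fun j => x j = -1).card →
      (∑ S ∈ Finset.univ.powerset, fhat S * ∏ j ∈ S, x j) = 0) :
    ∀ S, fhat S = 0 := by
  -- F σ = f evaluated at the ±1 point given by σ
  set F : (Fin n → Bool) → ℝ :=
    fun σ => ∑ S ∈ Finset.univ.powerset, fhat S * chi S σ with hF
  set G : (Fin n → Bool) → ℝ :=
    fun σ => ∑ S ∈ Finset.univ.powerset, fhat S * ((n:ℝ) - 2 * S.card) * chi S σ with hG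
  -- F vanishes on even points
  have hFeven : ∀ σ : Fin n → Bool,
      Even (Finset.univ.filter fun j => σ j).card → F σ = 0 := by
    intro σ hσ
    have hx : ∀ i, sgn (σ i) = 1 ∨ sgn (σ i) = -1 := by
      intro i; cases σ i <;> simp [sgn]
    have hfilter : (Finset.univ.filter fun j => sgn (σ j) = -1)
        = (Finset.univ.filter fun j => σ j) := by
      apply Finset.filter_congr
      intro j _
      cases h : σ j <;> simp [sgn] <;> norm_num
    have := hvanish (fun j => sgn (σ j)) hx (by rw [hfilter]; exact hσ)
    simpa [hF, chi] using this
  -- G vanishes on odd points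
  have hGodd : ∀ σ : Fin n → Bool,
      ¬ Even (Finset.univ.filter fun j => σ j).card → G σ = 0 := by
    intro σ hσ
    have key : G σ = ∑ i : Fin n, F (flip σ i) := by
      simp only [hF, hG]
      rw [Finset.sum_comm]
      apply Finset.sum_congr rfl
      intro S _
      simp only [chi_flip]
      rw [← Finset.mul_sum, ← Finset.sum_mul, sum_if_mem]
      ring
    rw [key]
    apply Finset.sum_eq_zero
    intro i _
    exact hFeven _ (flip_parity σ i hσ)
  -- the inner product of F and G over the whole cube is zero
  have hFG : ∑ σ : Fin n → Bool, F σ * G σ = 0 := by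
    apply Finset.sum_eq_zero
    intro σ _
    by_cases h : Even (Finset.univ.filter fun j => σ j).card
    · rw [hFeven σ h, zero_mul]
    · rw [hGodd σ h, mul_zero]
  -- expand the inner product via orthogonality
  have expand : ∑ σ : Fin n → Bool, F σ * G σ
      = (2:ℝ)^n * ∑ S ∈ Finset.univ.powerset,
          fhat S ^ 2 * ((n:ℝ) - 2 * S.card) := by
    have step : ∀ σ : Fin n → Bool, F σ * G σ
        = ∑ S ∈ Finset.univ.powerset, ∑ T ∈ Finset.univ.powerset,
            fhat S * fhat T * ((n:ℝ) - 2 * S.card) * chi (S ∆ T) σ := by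
      intro σ
      simp only [hF, hG, Finset.sum_mul, Finset.mul_sum]
      apply Finset.sum_congr rfl; intro S _
      apply Finset.sum_congr rfl; intro T _
      rw [← chi_mul]; ring
    rw [Finset.sum_congr rfl (fun σ _ => step σ), Finset.sum_comm]
    have step2 : ∀ S ∈ (Finset.univ : Finset (Fin n)).powerset,
        (∑ σ : Fin n → Bool, ∑ T ∈ Finset.univ.powerset,
          fhat S * fhat T * ((n:ℝ) - 2 * S.card) * chi (S ∆ T) σ)
        = (2:ℝ)^n * (fhat S ^ 2 * ((n:ℝ) - 2 * S.card)) := by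
      intro S _
      rw [Finset.sum_comm]
      have inner : ∀ T ∈ (Finset.univ : Finset (Fin n)).powerset,
          (∑ σ : Fin n → Bool,
            fhat S * fhat T * ((n:ℝ) - 2 * S.card) * chi (S ∆ T) σ)
          = fhat S * fhat T * ((n:ℝ) - 2 * S.card)
              * (if S ∆ T = ∅ then (2:ℝ)^n else 0) := by
        intro T _
        rw [← Finset.mul_sum, orth]
      rw [Finset.sum_congr rfl inner]
      rw [Finset.sum_eq_single S]
      · rw [symmDiff_self, Finset.bot_eq_empty, if_pos rfl]
        ring
      · intro T _ hTS
        rw [if_neg, mul_zero]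
        rw [← Finset.bot_eq_empty, symmDiff_eq_bot]
        exact fun h => hTS h.symm
      · intro h; exact absurd (by simp) h
    rw [Finset.sum_congr rfl step2, ← Finset.mul_sum]
  rw [expand] at hFG
  have h2 : (2:ℝ)^n ≠ 0 := by positivity
  have hsum : ∑ S ∈ Finset.univ.powerset,
      fhat S ^ 2 * ((n:ℝ) - 2 * S.card) = 0 := by
    rcases mul_eq_zero.1 hFG with h | h
    · exact absurd h h2
    · exact h
  have hnonneg : ∀ S ∈ (Finset.univ : Finset (Fin n)).powerset,
      0 ≤ fhat S ^ 2 * ((n:ℝ) - 2 * S.card) := by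
    intro S _
    by_cases h : fhat S = 0
    · simp [h]
    · have hcard : S.card ≤ d := hdeg S h
      have : (S.card : ℝ) ≤ d := by exact_mod_cast hcard
      have hn : (2 * d + 1 : ℝ) ≤ n := by exact_mod_cast hd
      nlinarith [sq_nonneg (fhat S)]
  have hall := (Finset.sum_eq_zero_iff_of_nonneg hnonneg).1 hsum
  intro S
  by_contra h
  have hcard : S.card ≤ d := hdeg S h
  have h1 : (S.card : ℝ) ≤ d := by exact_mod_cast hcard
  have hn : (2 * d + 1 : ℝ) ≤ n := by exact_mod_cast hd
  have := hall S (by simp)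
  have hpos : 0 < fhat S ^ 2 := by positivity
  nlinarith

end Vanish

theorem vanishing_on_even_points_implies_zero
    (n d : ℕ) (hd : 2 * d + 1 ≤ n)
    (fhat : Finset (Fin n) → ℝ)
    (hdeg : ∀ S : Finset (Fin n), fhat S ≠ 0 → S.card ≤ d)
    (hvanish : ∀ x : Fin n → ℝ, (∀ i, x i = 1 ∨ x i = -1) →
      Even (Finset.univ.filter fun j => x j = -1).card →
      (∑ S ∈ Finset.univ.powerset, fhat S * ∏ j ∈ S, x j) = 0) :
    ∀ x : Fin n → ℝ, (∀ i, x i = 1 ∨ x i = -1) →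
      (∑ S ∈ Finset.univ.powerset, fhat S * ∏ j ∈ S, x j) = 0 := by
  have h := Vanish.main_aux n d hd fhat hdeg hvanish
  intro x _
  apply Finset.sum_eq_zero
  intro S _
  rw [h S, zero_mul]
end

section
/- Let X be a normed space, m ≥ 2 even, and f : {-1,1}^n → X with deg(f) = d ≤ n/m - 1/2. Then for any S ⊆ [n] with |S| = d there exist a probability measure μ supported on W(m) and a function h : W(m) → {-1,1}, both depending only on S, m, d, n (not on f), such that \hat{f}(S) = ∫_{W(m)} h(x) f(x) dμ(x). -/
open MeasureTheory Finset

namespace InterpCoeff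

def sgn (e : Bool) : ℝ := if e then 1 else -1

lemma sgn_pm (e : Bool) : sgn e = 1 ∨ sgn e = -1 := by cases e <;> simp [sgn]

def sig (m2 : ℕ) {mb : ℕ} (l : ZMod mb) (ro : Option (ZMod mb)) : ℝ :=
  match ro with
  | none => 1
  | some r => if (l + r).val < m2 then -1 else 1

lemma sig_none (m2 : ℕ) {mb : ℕ} (l : ZMod mb) : sig m2 l none = 1 := rfl

lemma sig_some (m2 : ℕ) {mb : ℕ} (l r : ZMod mb) :
    sig m2 l (some r) = if (l + r).val < m2 then -1 else 1 := rfl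

lemma sig_pm (m2 : ℕ) {mb : ℕ} (l : ZMod mb) (ro : Option (ZMod mb)) :
    sig m2 l ro = 1 ∨ sig m2 l ro = -1 := by
  match ro with
  | none => exact Or.inl rfl
  | some r =>
    rw [sig_some]
    by_cases h : (l + r).val < m2
    · right; simp [h]
    · left; simp [h]

def bsgn {mb : ℕ} (ro : Option (ZMod mb)) : ℝ := if ro.isSome then -1 else 1

lemma bsgn_pm {mb : ℕ} (ro : Option (ZMod mb)) : bsgn ro = 1 ∨ bsgn ro = -1 := by
  by_cases h : ro.isSome <;> simp [bsgn, h]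

lemma card_val_lt {mb m2 : ℕ} [NeZero mb] (h2 : m2 ≤ mb) :
    (univ.filter fun t : ZMod mb => t.val < m2).card = m2 := by
  have h : (univ.filter fun t : ZMod mb => t.val < m2).card = (Finset.range m2).card := by
    apply Finset.card_nbij' (i := fun t => t.val) (j := fun j => ((j : ℕ) : ZMod mb))
    · intro a ha
      simp only [mem_coe, mem_filter, mem_univ, true_and] at ha
      simpa using ha
    · intro b hb
      simp only [mem_coe, mem_range] at hb
      simp only [mem_coe, mem_filter, mem_univ, true_and]
      rw [ZMod.val_cast_of_lt (lt_of_lt_of_le hb h2)]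
      exact hb
    · intro a _; exact ZMod.natCast_rightInverse a
    · intro b hb
      simp only [mem_coe, mem_range] at hb
      exact ZMod.val_cast_of_lt (lt_of_lt_of_le hb h2)
  simpa using h

/-- rotation counting -/
lemma card_rot {mb m2 : ℕ} [NeZero mb] (h2 : m2 ≤ mb) (c : ZMod mb) :
    (univ.filter fun l : ZMod mb => (l + c).val < m2).card = m2 := by
  have hbij : (univ.filter fun l : ZMod mb => (l + c).val < m2).card
      = (univ.filter fun t : ZMod mb => t.val < m2).card := by
    apply Finset.card_nbij (i := fun l => l + c)
    · intro a ha
      simp only [mem_coe, mem_filter, mem_univ, true_and] at ha ⊢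
      exact ha
    · intro a _ b _ hab
      simpa using congrArg (fun z => z - c) hab
    · intro t ht
      simp only [Set.mem_image, mem_coe, mem_filter, mem_univ, true_and] at ht ⊢
      exact ⟨t - c, by simpa using ht, by ring⟩
  rw [hbij, card_val_lt h2]

/-- sum of sig over rotations -/
lemma sig_sum {mb m2 : ℕ} [NeZero mb] (hmb : mb = 2 * m2 - 1) (hm2 : 1 ≤ m2) (l : ZMod mb) :
    ∑ r : ZMod mb, sig m2 l (some r) = -1 := by
  have h2 : m2 ≤ mb := by omega
  have hcard : (univ.filter fun r : ZMod mb => (l + r).val < m2).card = m2 := by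
    have := card_rot (mb := mb) h2 l
    calc (univ.filter fun r : ZMod mb => (l + r).val < m2).card
        = (univ.filter fun r : ZMod mb => (r + l).val < m2).card := by
          congr 1; apply Finset.filter_congr; intro r _; rw [add_comm]
      _ = m2 := card_rot h2 l
  have hcardnot : (univ.filter fun r : ZMod mb => ¬ (l + r).val < m2).card = mb - m2 := by
    have htot := Finset.card_filter_add_card_filter_not
      (s := (univ : Finset (ZMod mb))) (p := fun r => (l + r).val < m2)
    rw [Finset.card_univ, ZMod.card] at htot
    omega
  calc ∑ r : ZMod mb, sig m2 l (some r)
      = ∑ r : ZMod mb, (if (l + r).val < m2 then (-1 : ℝ) else 1) := by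
        apply Finset.sum_congr rfl; intro r _; rw [sig_some]
    _ = ((univ.filter fun r : ZMod mb => (l + r).val < m2).card : ℝ) * (-1)
        + ((univ.filter fun r : ZMod mb => ¬ (l + r).val < m2).card : ℝ) * 1 := by
        rw [Finset.sum_ite, Finset.sum_const, Finset.sum_const]
        simp [nsmul_eq_mul]
    _ = -1 := by
        rw [hcard, hcardnot]
        have : mb - m2 = m2 - 1 := by omega
        rw [this]
        have : ((m2 - 1 : ℕ) : ℝ) = (m2 : ℝ) - 1 := by
          have : (1:ℕ) ≤ m2 := hm2
          push_cast [Nat.cast_sub this]; ring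
        rw [this]; ring

abbrev Th (mb : ℕ) := Bool × Option (ZMod mb)
abbrev Idx (d mb m2 : ℕ) := Fin d ⊕ ((Fin d × ZMod mb) ⊕ Fin m2)

def pival {d mb : ℕ} (θ : Fin d → Th mb) : ℝ := ∏ q, bsgn (θ q).2

def val {d mb : ℕ} (m2 : ℕ) (θ : Fin d → Th mb) : Idx d mb m2 → ℝ
  | Sum.inl q => sgn (θ q).1
  | Sum.inr (Sum.inl (q, l)) => sgn (θ q).1 * sig m2 l (θ q).2
  | Sum.inr (Sum.inr _) => pival θ

lemma prod_if_one {α : Type*} [Fintype α] (P : α → Prop) [DecidablePred P] (c : ℝ) :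
    (∏ a : α, (if P a then c else 1)) = c ^ (Finset.univ.filter P).card := by
  rw [Finset.prod_ite, Finset.prod_const, Finset.prod_const, one_pow, mul_one]

lemma pival_eq {d mb : ℕ} (θ : Fin d → Th mb) :
    pival θ = (-1 : ℝ) ^ (Finset.univ.filter fun q => (θ q).2.isSome).card := by
  rw [pival]
  calc (∏ q, bsgn (θ q).2) = ∏ q, (if (θ q).2.isSome then (-1:ℝ) else 1) := rfl
    _ = _ := prod_if_one _ _

lemma pival_pm {d mb : ℕ} (θ : Fin d → Th mb) : pival θ = 1 ∨ pival θ = -1 := by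
  rw [pival_eq]
  rcases Nat.even_or_odd (Finset.univ.filter fun q => (θ q).2.isSome).card with h | h
  · left; exact h.neg_one_pow
  · right; exact h.neg_one_pow

lemma val_pm {d mb m2 : ℕ} (θ : Fin d → Th mb) (a : Idx d mb m2) :
    val m2 θ a = 1 ∨ val m2 θ a = -1 := by
  match a with
  | Sum.inl q => exact sgn_pm _
  | Sum.inr (Sum.inl (q, l)) =>
    rcases sgn_pm (θ q).1 with h1 | h1 <;> rcases sig_pm m2 l (θ q).2 with h2 | h2 <;>
      simp [val, h1, h2]
  | Sum.inr (Sum.inr j) => exact pival_pm θ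

open Classical in
noncomputable def xvec {d mb m2 n : ℕ} (Ψ : Idx d mb m2 → Fin n) (θ : Fin d → Th mb)
    (i : Fin n) : ℝ :=
  if h : ∃ a, Ψ a = i then val m2 θ h.choose else 1

lemma xvec_Psi {d mb m2 n : ℕ} {Ψ : Idx d mb m2 → Fin n} (hΨ : Function.Injective Ψ)
    (θ : Fin d → Th mb) (a : Idx d mb m2) : xvec Ψ θ (Ψ a) = val m2 θ a := by
  have h : ∃ a', Ψ a' = Ψ a := ⟨a, rfl⟩
  rw [xvec, dif_pos h]
  exact congrArg (val m2 θ) (hΨ h.choose_spec)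

lemma xvec_not_mem {d mb m2 n : ℕ} {Ψ : Idx d mb m2 → Fin n} {i : Fin n}
    (h : ¬ ∃ a, Ψ a = i) (θ : Fin d → Th mb) : xvec Ψ θ i = 1 := by
  rw [xvec, dif_neg h]

lemma xvec_pm {d mb m2 n : ℕ} (Ψ : Idx d mb m2 → Fin n) (θ : Fin d → Th mb) (i : Fin n) :
    xvec Ψ θ i = 1 ∨ xvec Ψ θ i = -1 := by
  by_cases h : ∃ a, Ψ a = i
  · rw [xvec, dif_pos h]; exact val_pm θ _
  · left; exact xvec_not_mem h θ

lemma count_filter_eq {d mb m2 n : ℕ} [NeZero mb] {Ψ : Idx d mb m2 → Fin n}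
    (hΨ : Function.Injective Ψ) (θ : Fin d → Th mb) :
    (Finset.univ.filter fun i => xvec Ψ θ i = -1)
      = (Finset.univ.filter fun a => val m2 θ a = -1).map ⟨Ψ, hΨ⟩ := by
  ext i
  simp only [mem_filter, mem_univ, true_and, mem_map, Function.Embedding.coeFn_mk]
  constructor
  · intro hi
    by_cases h : ∃ a, Ψ a = i
    · refine ⟨h.choose, ?_, h.choose_spec⟩
      rw [← h.choose_spec, xvec_Psi hΨ] at hi
      exact hi
    · rw [xvec_not_mem h] at hi; norm_num at hi
  · rintro ⟨a, ha, rfl⟩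
    rw [xvec_Psi hΨ]; exact ha

lemma count_dvd {d mb m2 n : ℕ} [NeZero mb] (hmb : mb = 2 * m2 - 1) (hm2 : 1 ≤ m2)
    {Ψ : Idx d mb m2 → Fin n} (hΨ : Function.Injective Ψ) (θ : Fin d → Th mb) :
    (2 * m2) ∣ (Finset.univ.filter fun i => xvec Ψ θ i = -1).card := by
  have h2 : m2 ≤ mb := by omega
  rw [count_filter_eq hΨ θ, Finset.card_map]
  rw [Finset.card_filter]
  rw [Fintype.sum_sum_type, Fintype.sum_sum_type, Fintype.sum_prod_type]
  set B : ℕ := (Finset.univ.filter fun q => (θ q).2.isSome).card with hB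
  -- per-q evaluation for S-part plus block-part
  have hq : ∀ q : Fin d,
      ((if val m2 θ (Sum.inl q) = -1 then (1:ℕ) else 0)
        + ∑ l : ZMod mb, (if val m2 θ (Sum.inr (Sum.inl (q, l))) = -1 then (1:ℕ) else 0))
      = (if (θ q).2.isSome then m2 else 0)
        + (if (θ q).2.isSome = false ∧ (θ q).1 = false then 2 * m2 else 0) := by
    intro q
    rcases hθq : θ q with ⟨e, ro⟩
    have hval1 : val m2 θ (Sum.inl q) = sgn e := by simp [val, hθq]
    have hval2 : ∀ l, val m2 θ (Sum.inr (Sum.inl (q, l))) = sgn e * sig m2 l ro := by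
      intro l; simp [val, hθq]
    rw [hval1]
    simp only [hval2]
    match e, ro with
    | true, none =>
      simp [sgn, sig_none]
      norm_num
    | false, none =>
      have : ∀ l : ZMod mb, (if sgn false * sig m2 l none = -1 then (1:ℕ) else 0) = 1 := by
        intro l; simp [sgn, sig_none]
      simp only [this, Finset.sum_const, Finset.card_univ, ZMod.card, smul_eq_mul, mul_one]
      simp [sgn]
      omega
    | true, some r =>
      have : ∀ l : ZMod mb, (if sgn true * sig m2 l (some r) = -1 then (1:ℕ) else 0)
          = if (l + r).val < m2 then 1 else 0 := by
        intro l
        by_cases h : (l + r).val < m2 <;> simp [sgn, sig_some, h] <;> norm_num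
      simp only [this]
      rw [← Finset.card_filter]
      rw [card_rot h2 r]
      simp [sgn]
      norm_num
    | false, some r =>
      have : ∀ l : ZMod mb, (if sgn false * sig m2 l (some r) = -1 then (1:ℕ) else 0)
          = if ¬ (l + r).val < m2 then 1 else 0 := by
        intro l
        by_cases h : (l + r).val < m2 <;> simp [sgn, sig_some, h] <;> norm_num
      simp only [this]
      rw [← Finset.card_filter]
      have htot := Finset.card_filter_add_card_filter_not
        (s := (Finset.univ : Finset (ZMod mb))) (p := fun l => (l + r).val < m2)
      rw [Finset.card_univ, ZMod.card, card_rot h2 r] at htot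
      have hcnt : (Finset.univ.filter fun l : ZMod mb => ¬ (l + r).val < m2).card = m2 - 1 := by
        omega
      rw [hcnt]
      simp [sgn]
      omega
  -- pool part
  have hpool : (∑ _j : Fin m2, (if val m2 θ (Sum.inr (Sum.inr _j)) = -1 then (1:ℕ) else 0))
      = if Odd B then m2 else 0 := by
    have hv : ∀ j : Fin m2, val m2 θ (Sum.inr (Sum.inr j)) = pival θ := fun j => rfl
    simp only [hv]
    rcases Nat.even_or_odd B with h | h
    · have : pival θ = 1 := by rw [pival_eq, ← hB]; exact h.neg_one_pow
      simp [this, Nat.not_odd_iff_even.mpr h]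
      norm_num
    · have : pival θ = -1 := by rw [pival_eq, ← hB]; exact h.neg_one_pow
      simp [this, h]
  rw [← add_assoc, ← Finset.sum_add_distrib]
  simp only [hq]
  rw [Finset.sum_add_distrib, hpool]
  set c1 : ℕ := (Finset.univ.filter fun q =>
      (θ q).2.isSome = false ∧ (θ q).1 = false).card with hc1
  have e1 : (∑ q : Fin d, if (θ q).2.isSome then m2 else 0) = B * m2 := by
    rw [Finset.sum_ite, Finset.sum_const, Finset.sum_const_zero, add_zero, smul_eq_mul, ← hB]
  have e2 : (∑ q : Fin d, if (θ q).2.isSome = false ∧ (θ q).1 = false then 2 * m2 else 0)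
      = c1 * (2 * m2) := by
    rw [Finset.sum_ite, Finset.sum_const, Finset.sum_const_zero, add_zero, smul_eq_mul, ← hc1]
  rw [e1, e2]
  rcases Nat.even_or_odd B with hpar | hpar
  · rw [if_neg (Nat.not_odd_iff_even.mpr hpar)]
    obtain ⟨t, ht⟩ := hpar
    exact ⟨t + c1, by rw [ht]; ring⟩
  · rw [if_pos hpar]
    obtain ⟨t, ht⟩ := hpar
    exact ⟨t + 1 + c1, by rw [ht]; ring⟩


lemma sum_bool_sgn_pow (k : ℕ) : (∑ e : Bool, sgn e ^ k) = 1 + (-1 : ℝ) ^ k := by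
  rw [Fintype.sum_bool]
  simp [sgn]

lemma main_scalar {d mb m2 n : ℕ} [NeZero mb] (hmb : mb = 2 * m2 - 1) (hm2 : 1 ≤ m2)
    {S : Finset (Fin n)} {Ψ : Idx d mb m2 → Fin n} (hΨ : Function.Injective Ψ)
    (hmemS : ∀ q, Ψ (Sum.inl q) ∈ S)
    (hsurjS : ∀ i ∈ S, ∃ q, Ψ (Sum.inl q) = i)
    (hScard : S.card = d)
    (T : Finset (Fin n)) (hT : T.card ≤ d) :
    ∑ θ : Fin d → Th mb, (∏ j ∈ S, xvec Ψ θ j) * (∏ j ∈ T, xvec Ψ θ j)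
      = if T = S then ((2 * (mb + 1) : ℝ)) ^ d else 0 := by
  classical
  set U : Finset (Fin n) := (S \ T) ∪ (T \ S) with hUdef
  set W : Fin d → Finset (ZMod mb) :=
    fun q => Finset.univ.filter (fun l => Ψ (Sum.inr (Sum.inl (q, l))) ∈ U) with hWdef
  set p : ℕ := (Finset.univ.filter (fun j : Fin m2 => Ψ (Sum.inr (Sum.inr j)) ∈ U)).card
    with hpdef
  set G : Fin d → Th mb → ℝ := fun q t =>
    (if Ψ (Sum.inl q) ∈ U then sgn t.1 else 1)
      * ((sgn t.1) ^ (W q).card * ∏ l ∈ W q, sig m2 l t.2)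
      * (bsgn t.2) ^ p with hGdef
  -- pointwise factorization
  have key : ∀ θ : Fin d → Th mb,
      (∏ j ∈ S, xvec Ψ θ j) * (∏ j ∈ T, xvec Ψ θ j) = ∏ q : Fin d, G q (θ q) := by
    intro θ
    have h1 : (∏ j ∈ S, xvec Ψ θ j) * (∏ j ∈ T, xvec Ψ θ j) = ∏ j ∈ U, xvec Ψ θ j := by
      have hSd : S = (S \ T) ∪ (S ∩ T) := (Finset.sdiff_union_inter S T).symm
      have hTd : T = (T \ S) ∪ (T ∩ S) := (Finset.sdiff_union_inter T S).symm
      have hsq : (∏ j ∈ S ∩ T, xvec Ψ θ j) * (∏ j ∈ T ∩ S, xvec Ψ θ j) = 1 := by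
        rw [Finset.inter_comm T S, ← Finset.prod_mul_distrib]
        apply Finset.prod_eq_one
        intro j _
        rcases xvec_pm Ψ θ j with h | h <;> rw [h] <;> norm_num
      calc (∏ j ∈ S, xvec Ψ θ j) * (∏ j ∈ T, xvec Ψ θ j)
          = ((∏ j ∈ S \ T, xvec Ψ θ j) * ∏ j ∈ S ∩ T, xvec Ψ θ j)
            * ((∏ j ∈ T \ S, xvec Ψ θ j) * ∏ j ∈ T ∩ S, xvec Ψ θ j) := by
            rw [← Finset.prod_union (Finset.disjoint_sdiff_inter S T),
                ← Finset.prod_union (Finset.disjoint_sdiff_inter T S), ← hSd, ← hTd]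
        _ = ((∏ j ∈ S \ T, xvec Ψ θ j) * (∏ j ∈ T \ S, xvec Ψ θ j))
            * ((∏ j ∈ S ∩ T, xvec Ψ θ j) * ∏ j ∈ T ∩ S, xvec Ψ θ j) := by ring
        _ = (∏ j ∈ U, xvec Ψ θ j) * 1 := by
            rw [hsq, Finset.prod_union disjoint_sdiff_sdiff]
        _ = ∏ j ∈ U, xvec Ψ θ j := mul_one _
    have h2 : ∏ j ∈ U, xvec Ψ θ j
        = ∏ a : Idx d mb m2, (if Ψ a ∈ U then val m2 θ a else 1) := by
      rw [Finset.prod_ite, Finset.prod_const_one, mul_one]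
      have hmap : ∏ a ∈ Finset.univ.filter (fun a : Idx d mb m2 => Ψ a ∈ U), val m2 θ a
          = ∏ i ∈ (Finset.univ.filter (fun a : Idx d mb m2 => Ψ a ∈ U)).map ⟨Ψ, hΨ⟩,
              xvec Ψ θ i := by
        rw [Finset.prod_map]
        apply Finset.prod_congr rfl
        intro a _
        rw [Function.Embedding.coeFn_mk, xvec_Psi hΨ]
      rw [hmap]
      have hsub : (Finset.univ.filter fun a : Idx d mb m2 => Ψ a ∈ U).map ⟨Ψ, hΨ⟩ ⊆ U := by
        intro i hi
        rw [Finset.mem_map] at hi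
        obtain ⟨a, ha, rfl⟩ := hi
        exact (Finset.mem_filter.mp ha).2
      have hone : ∀ i ∈ U,
          i ∉ (Finset.univ.filter fun a : Idx d mb m2 => Ψ a ∈ U).map ⟨Ψ, hΨ⟩ →
          xvec Ψ θ i = 1 := by
        intro i hiU hnot
        by_cases h : ∃ a, Ψ a = i
        · exfalso
          apply hnot
          rw [Finset.mem_map]
          obtain ⟨a, rfl⟩ := h
          exact ⟨a, Finset.mem_filter.mpr ⟨Finset.mem_univ a, hiU⟩, rfl⟩
        · exact xvec_not_mem h θ
      exact (Finset.prod_subset hsub hone).symm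
    have h3 : ∏ a : Idx d mb m2, (if Ψ a ∈ U then val m2 θ a else 1)
        = ∏ q : Fin d, G q (θ q) := by
      rw [Fintype.prod_sum_type, Fintype.prod_sum_type]
      have hpool : (∏ j : Fin m2, (if Ψ (Sum.inr (Sum.inr j)) ∈ U then val m2 θ
            (Sum.inr (Sum.inr j)) else 1))
          = ∏ q : Fin d, (bsgn (θ q).2) ^ p := by
        have : ∀ j : Fin m2, (if Ψ (Sum.inr (Sum.inr j)) ∈ U then val m2 θ
            (Sum.inr (Sum.inr j)) else 1) = (if Ψ (Sum.inr (Sum.inr j)) ∈ U then pival θ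
            else 1) := fun j => rfl
        rw [Finset.prod_congr rfl (fun j _ => this j), prod_if_one, ← hpdef, pival,
          ← Finset.prod_pow]
      have hblocks : (∏ x : Fin d × ZMod mb, (if Ψ (Sum.inr (Sum.inl x)) ∈ U then
            val m2 θ (Sum.inr (Sum.inl x)) else 1))
          = ∏ q : Fin d, ((sgn (θ q).1) ^ (W q).card * ∏ l ∈ W q, sig m2 l (θ q).2) := by
        rw [Fintype.prod_prod_type]
        apply Finset.prod_congr rfl
        intro q _
        have hWq : Finset.univ.filter (fun l => Ψ (Sum.inr (Sum.inl (q, l))) ∈ U) = W q := rfl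
        calc ∏ l : ZMod mb, (if Ψ (Sum.inr (Sum.inl (q, l))) ∈ U then
              val m2 θ (Sum.inr (Sum.inl (q, l))) else 1)
            = ∏ l : ZMod mb, (if Ψ (Sum.inr (Sum.inl (q, l))) ∈ U then
                sgn (θ q).1 * sig m2 l (θ q).2 else 1) := rfl
          _ = ∏ l ∈ W q, (sgn (θ q).1 * sig m2 l (θ q).2) := by
              rw [← Finset.prod_filter, hWq]
          _ = (sgn (θ q).1) ^ (W q).card * ∏ l ∈ W q, sig m2 l (θ q).2 := by
              rw [Finset.prod_mul_distrib, Finset.prod_const]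
      rw [hblocks, hpool, ← Finset.prod_mul_distrib, ← Finset.prod_mul_distrib]
      apply Finset.prod_congr rfl
      intro q _
      rw [hGdef]
      simp only [val]
      ring
    rw [h1, h2, h3]
  -- swap sum and product
  have hswap : (∑ θ : Fin d → Th mb, ∏ q : Fin d, G q (θ q))
      = ∏ q : Fin d, ∑ t : Th mb, G q t := by
    rw [Finset.prod_univ_sum (fun _ => (Finset.univ : Finset (Th mb))) G, Fintype.piFinset_univ]
  rw [Finset.sum_congr rfl (fun θ _ => key θ), hswap]
  by_cases hTS : T = S
  · rw [if_pos hTS]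
    have hUempty : U = ∅ := by rw [hUdef, hTS]; simp
    have hWempty : ∀ q, W q = ∅ := by intro q; rw [hWdef]; simp [hUempty]
    have hp0 : p = 0 := by rw [hpdef]; simp [hUempty]
    have : ∀ q, (∑ t : Th mb, G q t) = (2 * (mb + 1) : ℝ) := by
      intro q
      have hg : ∀ t : Th mb, G q t = 1 := by
        intro t
        rw [hGdef]
        simp [hUempty, hWempty q, hp0]
      rw [Finset.sum_congr rfl (fun t _ => hg t), Finset.sum_const, Finset.card_univ]
      have : Fintype.card (Th mb) = 2 * (mb + 1) := by
        rw [Fintype.card_prod, Fintype.card_bool, Fintype.card_option, ZMod.card]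
      rw [this]
      push_cast
      ring
    rw [Finset.prod_congr rfl (fun q _ => this q), Finset.prod_const, Finset.card_univ,
      Fintype.card_fin]
  · rw [if_neg hTS]
    -- pigeonhole to find a vanishing factor
    have hUne : U.Nonempty := by
      rw [Finset.nonempty_iff_ne_empty]
      intro h
      apply hTS
      rw [hUdef] at h
      have h1 : S \ T = ∅ := by
        rw [Finset.union_eq_empty] at h; exact h.1
      have h2 : T \ S = ∅ := by
        rw [Finset.union_eq_empty] at h; exact h.2
      rw [Finset.sdiff_eq_empty_iff_subset] at h1 h2
      exact Finset.Subset.antisymm h2 h1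
    set Q1 : Finset (Fin d) := Finset.univ.filter (fun q => Ψ (Sum.inl q) ∈ U) with hQ1def
    have hQ1map : (U ∩ S) = Q1.map ⟨fun q => Ψ (Sum.inl q),
        fun a b hab => by simpa using hΨ hab⟩ := by
      ext i
      simp only [Finset.mem_map, Function.Embedding.coeFn_mk, Finset.mem_inter, hQ1def,
        Finset.mem_filter, Finset.mem_univ, true_and]
      constructor
      · rintro ⟨hiU, hiS⟩
        obtain ⟨q, hq⟩ := hsurjS i hiS
        exact ⟨q, by rw [hq]; exact hiU, hq⟩
      · rintro ⟨q, hqU, rfl⟩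
        exact ⟨hqU, hmemS q⟩
    have hQ1card : Q1.card = (U ∩ S).card := by rw [hQ1map, Finset.card_map]
    -- |U ∩ S| ≥ |U \ S|
    have hUSint : U ∩ S = S \ T := by
      rw [hUdef]; ext i
      simp only [Finset.mem_inter, Finset.mem_union, Finset.mem_sdiff]
      tauto
    have hUSdiff : U \ S = T \ S := by
      rw [hUdef]; ext i
      simp only [Finset.mem_sdiff, Finset.mem_union]
      tauto
    have hge : (U \ S).card ≤ (U ∩ S).card := by
      rw [hUSint, hUSdiff]
      have h1 := Finset.card_inter_add_card_sdiff S T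
      have h2 := Finset.card_inter_add_card_sdiff T S
      rw [Finset.inter_comm T S] at h2
      omega
    -- structure of |AU|
    set AU : Finset (Idx d mb m2) := Finset.univ.filter (fun a => Ψ a ∈ U) with hAUdef
    have hAUcard : AU.card = Q1.card + ((∑ q : Fin d, (W q).card) + p) := by
      rw [hAUdef, Finset.card_filter, Fintype.sum_sum_type, Fintype.sum_sum_type,
        Fintype.sum_prod_type]
      congr 1
      · rw [hQ1def, Finset.card_filter]
      congr 1
      · apply Finset.sum_congr rfl
        intro q _
        rw [hWdef, Finset.card_filter]
      · rw [hpdef, Finset.card_filter]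
    have hAUle : AU.card ≤ U.card := by
      have hsub : AU.map ⟨Ψ, hΨ⟩ ⊆ U := by
        intro i hi
        rw [Finset.mem_map] at hi
        obtain ⟨a, ha, rfl⟩ := hi
        rw [hAUdef, Finset.mem_filter] at ha
        exact ha.2
      calc AU.card = (AU.map ⟨Ψ, hΨ⟩).card := (Finset.card_map _).symm
        _ ≤ U.card := Finset.card_le_card hsub
    have hUcard : U.card = (U ∩ S).card + (U \ S).card :=
      (Finset.card_inter_add_card_sdiff U S).symm
    by_cases hA : ∃ q, Ψ (Sum.inl q) ∈ U ∧ W q = ∅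
    · obtain ⟨q0, hq0U, hq0W⟩ := hA
      apply Finset.prod_eq_zero (Finset.mem_univ q0)
      have hg : ∀ t : Th mb, G q0 t = sgn t.1 * (bsgn t.2) ^ p := by
        intro t
        rw [hGdef]
        simp [hq0U, hq0W]
      rw [Finset.sum_congr rfl (fun t _ => hg t), Fintype.sum_prod_type]
      have : ∀ e : Bool, (∑ ro : Option (ZMod mb), sgn e * (bsgn ro) ^ p)
          = sgn e * (∑ ro : Option (ZMod mb), (bsgn ro) ^ p) := by
        intro e; rw [Finset.mul_sum]
      rw [Finset.sum_congr rfl (fun e _ => this e), ← Finset.sum_mul, Fintype.sum_bool]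
      simp [sgn]
    · push_neg at hA
      have hW1 : ∀ q ∈ Q1, 1 ≤ (W q).card := by
        intro q hq
        rw [hQ1def, Finset.mem_filter] at hq
        have := hA q hq.2
        rwa [← Finset.card_pos] at this
      have hQ1pos : 0 < Q1.card := by
        rw [hQ1card]
        rcases Nat.eq_zero_or_pos (U ∩ S).card with h | h
        · exfalso
          have h1 : (U \ S).card = 0 := le_antisymm (h ▸ hge) (Nat.zero_le _)
          have h2 : U.card = 0 := by rw [hUcard, h, h1]
          rw [Finset.card_eq_zero] at h2
          exact absurd h2 (Finset.nonempty_iff_ne_empty.mp hUne)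
        · exact h
      have hsum_ge : Q1.card ≤ ∑ q ∈ Q1, (W q).card := by
        calc Q1.card = ∑ _q ∈ Q1, 1 := by rw [Finset.sum_const, smul_eq_mul, mul_one]
          _ ≤ ∑ q ∈ Q1, (W q).card := Finset.sum_le_sum hW1
      have hsuble : ∑ q ∈ Q1, (W q).card ≤ ∑ q : Fin d, (W q).card :=
        Finset.sum_le_sum_of_subset (Finset.subset_univ Q1)
      have hsum_le : (∑ q ∈ Q1, (W q).card) + p ≤ Q1.card := by omega
      have hp0 : p = 0 := by omega
      have heq : (∑ _q ∈ Q1, 1) = ∑ q ∈ Q1, (W q).card := by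
        have h1 : (∑ _q ∈ Q1, 1) = Q1.card := by rw [Finset.sum_const, smul_eq_mul, mul_one]
        omega
      have heach : ∀ q ∈ Q1, (W q).card = 1 := by
        intro q hq
        exact ((Finset.sum_eq_sum_iff_of_le hW1).mp heq q hq).symm
      obtain ⟨q0, hq0⟩ := Finset.card_pos.mp hQ1pos
      obtain ⟨l0, hl0⟩ := Finset.card_eq_one.mp (heach q0 hq0)
      apply Finset.prod_eq_zero (Finset.mem_univ q0)
      have hg : ∀ t : Th mb, G q0 t
          = ((if Ψ (Sum.inl q0) ∈ U then sgn t.1 else 1) * sgn t.1) * sig m2 l0 t.2 := by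
        intro t
        rw [hGdef]
        simp only [hl0, hp0, Finset.card_singleton, Finset.prod_singleton, pow_one, pow_zero,
          mul_one]
        ring
      rw [Finset.sum_congr rfl (fun t _ => hg t), Fintype.sum_prod_type]
      have hfac : ∀ e : Bool, (∑ ro : Option (ZMod mb),
          ((if Ψ (Sum.inl q0) ∈ U then sgn e else 1) * sgn e) * sig m2 l0 ro)
          = ((if Ψ (Sum.inl q0) ∈ U then sgn e else 1) * sgn e)
            * (∑ ro : Option (ZMod mb), sig m2 l0 ro) := by
        intro e
        rw [Finset.mul_sum]
      have hzero : (∑ ro : Option (ZMod mb), sig m2 l0 ro) = 0 := by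
        rw [Fintype.sum_option, sig_none, sig_sum hmb hm2 l0]
        norm_num
      rw [Finset.sum_congr rfl (fun e _ => hfac e)]
      simp [hzero]

end InterpCoeff

open InterpCoeff

theorem interpolation_formula_for_top_fourier_coeff
    (X : Type*) [NormedAddCommGroup X] [NormedSpace ℝ X] [CompleteSpace X]
    (n m d : ℕ) (hm : Even m) (hm2 : 2 ≤ m)
    (hd : (d : ℝ) ≤ (n : ℝ) / m - 1 / 2)
    (S : Finset (Fin n)) (hS : S.card = d) :
    ∃ (μ : Measure (Fin n → ℝ)) (h : (Fin n → ℝ) → ℝ),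
      IsProbabilityMeasure μ ∧
      (μ {x : Fin n → ℝ | ¬ ((∀ i, x i = 1 ∨ x i = -1) ∧
          m ∣ (Finset.univ.filter fun j => x j = -1).card)} = 0) ∧
      (∀ x : Fin n → ℝ, (∀ i, x i = 1 ∨ x i = -1) →
          m ∣ (Finset.univ.filter fun j => x j = -1).card →
          h x = 1 ∨ h x = -1) ∧
      (∀ fhat : Finset (Fin n) → X,
        (∀ T : Finset (Fin n), fhat T ≠ 0 → T.card ≤ d) →
        fhat S = ∫ x, h x • (∑ T ∈ Finset.univ.powerset,
            (∏ j ∈ T, x j) • fhat T) ∂μ) := by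
  classical
  subst hS
  set d := S.card with hddef
  set m2 := m / 2 with hm2def
  have hm2m : m = 2 * m2 := by
    obtain ⟨t, ht⟩ := hm
    omega
  set mb := m - 1 with hmbdef
  have hmb : mb = 2 * m2 - 1 := by omega
  have hm2pos : 1 ≤ m2 := by omega
  haveI : NeZero mb := ⟨by omega⟩
  -- the dimension bound
  have hnd : d * m + m2 ≤ n := by
    have hmpos : (0:ℝ) < m := by
      have : (2:ℝ) ≤ m := by exact_mod_cast hm2
      linarith
    have h2 : (d:ℝ) + 1/2 ≤ (n:ℝ)/m := by linarith
    have h1 : ((d:ℝ) + 1/2) * m ≤ ((n:ℝ)/m) * m :=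
      mul_le_mul_of_nonneg_right h2 (le_of_lt hmpos)
    rw [div_mul_cancel₀ _ (ne_of_gt hmpos)] at h1
    have h3 : ((d * m + m2 : ℕ) : ℝ) ≤ (n : ℝ) := by
      have hhalf : (1/2 : ℝ) * m = m2 := by
        rw [hm2m]
        push_cast
        ring
      push_cast
      nlinarith
    exact_mod_cast h3
  have hdn : d ≤ n := by
    have : d ≤ d * m := Nat.le_mul_of_pos_right d (by omega)
    omega
  -- build the coordinate layout
  have hcard1 : Fintype.card {x // x ∈ S} = d := by rw [Fintype.card_coe]
  let eS : {x // x ∈ S} ≃ Fin d := Fintype.equivFinOfCardEq hcard1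
  have hcardC : Fintype.card {x // x ∈ Sᶜ} = n - d := by
    rw [Fintype.card_coe, Finset.card_compl, Fintype.card_fin]
  have hcard2 : Fintype.card ((Fin d × ZMod mb) ⊕ Fin m2)
      ≤ Fintype.card {x // x ∈ Sᶜ} := by
    rw [hcardC, Fintype.card_sum, Fintype.card_prod, Fintype.card_fin, Fintype.card_fin,
      ZMod.card]
    have hkey : d * mb + d = d * m := by
      have h : mb + 1 = m := by omega
      calc d * mb + d = d * (mb + 1) := by ring
        _ = d * m := by rw [h]
    omega
  obtain ⟨J⟩ : Nonempty (((Fin d × ZMod mb) ⊕ Fin m2) ↪ {x // x ∈ Sᶜ}) :=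
    Function.Embedding.nonempty_iff_card_le.mpr hcard2
  set Ψ : Idx d mb m2 → Fin n := fun a => match a with
    | Sum.inl q => (eS.symm q : Fin n)
    | Sum.inr b => (J b : Fin n) with hΨdef
  have hmemS : ∀ q, Ψ (Sum.inl q) ∈ S := fun q => (eS.symm q).2
  have hmemC : ∀ b, Ψ (Sum.inr b) ∉ S := by
    intro b
    have := (J b).2
    rw [Finset.mem_compl] at this
    exact this
  have hΨ : Function.Injective Ψ := by
    rintro (q | b) (q' | b') hab
    · have h1 : eS.symm q = eS.symm q' := Subtype.ext hab
      rw [eS.symm.injective h1]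
    · exact absurd (hab ▸ hmemS q) (hmemC b')
    · exact absurd (hab.symm ▸ hmemS q') (hmemC b)
    · rw [J.injective (Subtype.ext hab)]
  have hsurjS : ∀ i ∈ S, ∃ q, Ψ (Sum.inl q) = i := by
    intro i hi
    refine ⟨eS ⟨i, hi⟩, ?_⟩
    show ((eS.symm (eS ⟨i, hi⟩)) : Fin n) = i
    rw [Equiv.symm_apply_apply]
  -- the measure
  set c : ENNReal := ((2 * (mb + 1) : ENNReal) ^ d)⁻¹ with hcdef
  have hbase_ne : (2 * (mb + 1) : ENNReal) ≠ 0 := by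
    simp
  have hbase_top : (2 * (mb + 1) : ENNReal) ≠ ⊤ := by
    simp [ENNReal.mul_ne_top]
  set ν : Measure (Fin n → ℝ) :=
    ∑ θ ∈ (Finset.univ : Finset (Fin d → Th mb)), Measure.dirac (xvec Ψ θ) with hνdef
  set μ : Measure (Fin n → ℝ) := c • ν with hμdef
  have hνuniv : ν Set.univ = (2 * (mb + 1) : ENNReal) ^ d := by
    rw [hνdef, Measure.finset_sum_apply]
    have h1 : ∀ θ : Fin d → Th mb, (Measure.dirac (xvec Ψ θ)) Set.univ = 1 := by
      intro θ; simp
    rw [Finset.sum_congr rfl (fun θ _ => h1 θ), Finset.sum_const, Finset.card_univ]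
    have h2 : Fintype.card (Fin d → Th mb) = (2 * (mb + 1)) ^ d := by
      rw [Fintype.card_fun]
      congr 1
      rw [Fintype.card_prod, Fintype.card_bool, Fintype.card_option, ZMod.card]
      rw [Fintype.card_fin]
    rw [h2]
    simp only [nsmul_eq_mul, mul_one]
    push_cast
    ring
  refine ⟨μ, fun x => ∏ j ∈ S, x j, ?_, ?_, ?_, ?_⟩
  · -- probability measure
    constructor
    rw [hμdef, Measure.smul_apply, smul_eq_mul, hνuniv, hcdef]
    exact ENNReal.inv_mul_cancel (pow_ne_zero d hbase_ne)
      (ENNReal.pow_ne_top hbase_top)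
  · -- support
    rw [hμdef, Measure.smul_apply, hνdef, Measure.finset_sum_apply]
    have hz : ∀ θ : Fin d → Th mb, (Measure.dirac (xvec Ψ θ))
        {x : Fin n → ℝ | ¬ ((∀ i, x i = 1 ∨ x i = -1) ∧
          m ∣ (Finset.univ.filter fun j => x j = -1).card)} = 0 := by
      intro θ
      rw [Measure.dirac_apply]
      apply Set.indicator_of_notMem
      rw [Set.mem_setOf_eq, not_not]
      refine ⟨xvec_pm Ψ θ, ?_⟩
      rw [hm2m]
      exact count_dvd hmb hm2pos hΨ θ
    rw [Finset.sum_congr rfl (fun θ _ => hz θ), Finset.sum_const, smul_zero, smul_zero]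
  · -- h is ±1
    intro x hx _
    apply Finset.prod_induction _ (fun r : ℝ => r = 1 ∨ r = -1)
    · rintro a b (ha | ha) (hb | hb) <;> rw [ha, hb] <;> norm_num
    · left; rfl
    · intro i _; exact hx i
  · -- the interpolation identity
    intro fhat hdeg
    set f : (Fin n → ℝ) → X := fun x => (∏ j ∈ S, x j) • ∑ T ∈ Finset.univ.powerset,
      (∏ j ∈ T, x j) • fhat T with hfdef
    have hcont : Continuous f := by
      apply Continuous.smul
      · exact continuous_finset_prod _ (fun j _ => continuous_apply j)
      · apply continuous_finset_sum
        intro T _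
        exact (continuous_finset_prod _ (fun j _ => continuous_apply j)).smul
          continuous_const
    have hint : ∀ θ ∈ (Finset.univ : Finset (Fin d → Th mb)),
        Integrable f (Measure.dirac (xvec Ψ θ)) := by
      intro θ _
      refine ⟨hcont.stronglyMeasurable.aestronglyMeasurable, ?_⟩
      simp only [MeasureTheory.HasFiniteIntegral, MeasureTheory.lintegral_dirac]
      exact ENNReal.coe_lt_top
    have hcalc : ∫ x, f x ∂μ = c.toReal • ∑ θ : Fin d → Th mb, f (xvec Ψ θ) := by
      rw [hμdef, integral_smul_measure, hνdef, integral_finset_sum_measure hint]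
      congr 1
      exact Finset.sum_congr rfl (fun θ _ => integral_dirac f (xvec Ψ θ))
    have hswap : (∑ θ : Fin d → Th mb, f (xvec Ψ θ))
        = ∑ T ∈ Finset.univ.powerset, (∑ θ : Fin d → Th mb,
            (∏ j ∈ S, xvec Ψ θ j) * (∏ j ∈ T, xvec Ψ θ j)) • fhat T := by
      rw [hfdef]
      simp only [Finset.smul_sum, smul_smul]
      rw [Finset.sum_comm]
      exact Finset.sum_congr rfl (fun T _ => (Finset.sum_smul).symm)
    have hterm : ∀ T ∈ Finset.univ.powerset (α := Fin n),
        ((∑ θ : Fin d → Th mb,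
            (∏ j ∈ S, xvec Ψ θ j) * (∏ j ∈ T, xvec Ψ θ j)) • fhat T)
        = if T = S then ((2 * ((mb : ℝ) + 1)) ^ d) • fhat S else 0 := by
      intro T _
      by_cases hTd : T.card ≤ d
      · rw [main_scalar hmb hm2pos hΨ hmemS hsurjS rfl T hTd]
        by_cases hTS : T = S
        · rw [if_pos hTS, if_pos hTS, hTS]
        · rw [if_neg hTS, if_neg hTS, zero_smul]
      · have hz : fhat T = 0 := by
          by_contra hne
          exact hTd (hdeg T hne)
        rw [hz, smul_zero]
        have hTS : T ≠ S := by
          intro h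
          apply hTd
          rw [h]
        rw [if_neg hTS]
    have hsum : (∑ T ∈ Finset.univ.powerset, (∑ θ : Fin d → Th mb,
            (∏ j ∈ S, xvec Ψ θ j) * (∏ j ∈ T, xvec Ψ θ j)) • fhat T)
        = ((2 * ((mb : ℝ) + 1)) ^ d) • fhat S := by
      rw [Finset.sum_congr rfl hterm, Finset.sum_ite_eq' Finset.univ.powerset S
        (fun _ => ((2 * ((mb : ℝ) + 1)) ^ d) • fhat S)]
      rw [if_pos (Finset.mem_powerset.mpr (Finset.subset_univ S))]
    have hctoReal : c.toReal = ((2 * ((mb : ℝ) + 1)) ^ d)⁻¹ := by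
      have hcast : ((2 * (mb + 1) : ENNReal)) = (((2 * (mb + 1) : ℕ) : ENNReal)) := by
        push_cast
        ring
      rw [hcdef, hcast, ENNReal.toReal_inv, ENNReal.toReal_pow, ENNReal.toReal_natCast]
      push_cast
      ring
    rw [hcalc, hswap, hsum, hctoReal, smul_smul, inv_mul_cancel₀, one_smul]
    positivity
end

section
/- Let f : {-1,1}^n → R be of degree at most d, and let I_1,...,I_d be disjoint subsets of [n]. For y ∈ {-1,1}^d and x ∈ {-1,1}^n define y∘x ∈ {-1,1}^n by (y∘x)_i = y_j x_i if i ∈ I_j and (y∘x)_i = x_i otherwise. Then E_{y ~ unif({-1,1}^d)} [ f(y∘x) · y_1···y_d ] = sum over subsets T with |T ∩ I_j| = 1 for all j of \hat{f}(T) x^T. -/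
/-!
Expand `f(y∘x)` monomial by monomial: twisting multiplies `x^T` by `∏ⱼ y_j ^ |T ∩ I_j|`, so
after the extra factor `y_1⋯y_d` the average over `y` factors coordinatewise into
`∏ⱼ E[y_j ^ (|T ∩ I_j| + 1)]`, which is `1` when every `|T ∩ I_j|` is odd and `0` otherwise.
Since the `T ∩ I_j` are disjoint subsets of `T` and `|T| ≤ d`, all of them being odd forces
each to be a singleton.
-/

open Finset

theorem sum_sign_pow {R : Type*} [Ring R] (k : ℕ) :
    ∑ b : Bool, (if b then (1 : R) else -1) ^ k = if Even k then 2 else 0 := by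
  rcases Nat.even_or_odd k with hk | hk
  · simp [hk.neg_one_pow, hk, one_add_one_eq_two]
  · simp [hk.neg_one_pow, Nat.not_even_iff_odd.mpr hk]

theorem sum_prod_sign_pow {ι R : Type*} [Fintype ι] [DecidableEq ι] [CommRing R] (k : ι → ℕ) :
    ∑ s : ι → Bool, ∏ j, (if s j then (1 : R) else -1) ^ k j =
      if ∀ j, Even (k j) then 2 ^ Fintype.card ι else 0 := by
  rw [← Fintype.prod_sum fun j (b : Bool) => (if b then (1 : R) else -1) ^ k j]
  simp_rw [sum_sign_pow]
  split_ifs with h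
  · simp [h]
  · obtain ⟨j, hj⟩ := not_forall.mp h
    exact prod_eq_zero (mem_univ j) (if_neg hj)

section Twist

variable {ι α M : Type*} [Fintype ι] [DecidableEq α]

theorem prod_prod_filter_mem_eq_prod_pow [CommMonoid M] (g : ι → M) (T : Finset α)
    (I : ι → Finset α) :
    ∏ i ∈ T, ∏ j ∈ univ.filter fun j => i ∈ I j, g j = ∏ j, g j ^ #(T ∩ I j) := by
  rw [prod_comm' (t' := univ) (s' := fun j => T ∩ I j) (by simp [and_comm])]
  exact prod_congr rfl fun j _ => prod_const _

theorem prod_twist_mul_prod [CommMonoid M] (g : ι → M) (x : α → M) (T : Finset α)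
    (I : ι → Finset α) :
    (∏ i ∈ T, (∏ j ∈ univ.filter fun j => i ∈ I j, g j) * x i) * ∏ j, g j =
      (∏ i ∈ T, x i) * ∏ j, g j ^ (#(T ∩ I j) + 1) := by
  rw [prod_mul_distrib, prod_prod_filter_mem_eq_prod_pow]
  simp_rw [pow_succ, prod_mul_distrib]
  ac_rfl

theorem forall_odd_card_inter_iff {T : Finset α} {I : ι → Finset α}
    (hdisj : ∀ j j', j ≠ j' → Disjoint (I j) (I j')) (hT : #T ≤ Fintype.card ι) :
    (∀ j, Odd #(T ∩ I j)) ↔ ∀ j, #(T ∩ I j) = 1 := by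
  refine ⟨fun hodd j => ?_, fun h j => by simp [h j]⟩
  have hsum : ∑ j, #(T ∩ I j) ≤ #T := by
    rw [← card_biUnion fun j _ j' _ h => (hdisj j j' h).mono inter_subset_right inter_subset_right]
    exact card_le_card (biUnion_subset.mpr fun j _ => inter_subset_left)
  have hge : ∀ j ∈ univ, 1 ≤ #(T ∩ I j) := fun j _ => (hodd j).pos
  refine ((sum_eq_sum_iff_of_le hge).mp ?_ j (mem_univ j)).symm
  simp only [sum_const, card_univ, smul_eq_mul, mul_one]
  exact le_antisymm (sum_le_sum hge |>.trans' (by simp)) (hsum.trans hT)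

end Twist

theorem expectation_sign_twist_formula_general
    (n d : ℕ) (fhat : Finset (Fin n) → ℝ)
    (hdeg : ∀ T : Finset (Fin n), fhat T ≠ 0 → T.card ≤ d)
    (I : Fin d → Finset (Fin n))
    (hdisj : ∀ j j' : Fin d, j ≠ j' → Disjoint (I j) (I j'))
    (x : Fin n → ℝ) :
    (2 ^ d : ℝ)⁻¹ *
      (∑ s : Fin d → Bool,
        ((∑ T ∈ Finset.univ.powerset, fhat T *
            ∏ i ∈ T,
              ((∏ j ∈ Finset.univ.filter fun j : Fin d => i ∈ I j,
                  (if s j then (1 : ℝ) else -1)) * x i)) *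
          ∏ j : Fin d, (if s j then (1 : ℝ) else -1))) =
    ∑ T ∈ Finset.univ.powerset.filter
        (fun T : Finset (Fin n) => ∀ j : Fin d, (T ∩ I j).card = 1),
      fhat T * ∏ i ∈ T, x i := by
  have hterm (T : Finset (Fin n)) :
      (2 ^ d : ℝ)⁻¹ * ∑ s : Fin d → Bool, fhat T *
        ((∏ i ∈ T, (∏ j ∈ univ.filter fun j => i ∈ I j, (if s j then (1 : ℝ) else -1)) * x i) *
          ∏ j, (if s j then (1 : ℝ) else -1)) =
      if ∀ j, #(T ∩ I j) = 1 then fhat T * ∏ i ∈ T, x i else 0 := by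
    simp_rw [prod_twist_mul_prod, ← mul_sum, sum_prod_sign_pow, Nat.even_add_one,
      Nat.not_even_iff_odd, Fintype.card_fin]
    by_cases hf : fhat T = 0
    · simp [hf]
    simp only [forall_odd_card_inter_iff hdisj (by simpa using hdeg T hf)]
    split_ifs
    · field_simp
    · simp
  simp_rw [sum_mul, mul_sum, mul_assoc]
  rw [sum_comm, sum_filter]
  exact sum_congr rfl fun T _ => (mul_sum ..).symm.trans (hterm T)

theorem expectation_sign_twist_formula
    (n d : ℕ) (fhat : Finset (Fin n) → ℝ)
    (hdeg : ∀ T : Finset (Fin n), fhat T ≠ 0 → T.card ≤ d)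
    (I : Fin d → Finset (Fin n))
    (hdisj : ∀ j j' : Fin d, j ≠ j' → Disjoint (I j) (I j'))
    (x : Fin n → ℝ) (hx : ∀ i, x i = 1 ∨ x i = -1) :
    (2 ^ d : ℝ)⁻¹ *
      (∑ s : Fin d → Bool,
        ((∑ T ∈ Finset.univ.powerset, fhat T *
            ∏ i ∈ T,
              ((∏ j ∈ Finset.univ.filter fun j : Fin d => i ∈ I j,
                  (if s j then (1 : ℝ) else -1)) * x i)) *
          ∏ j : Fin d, (if s j then (1 : ℝ) else -1))) =
    ∑ T ∈ Finset.univ.powerset.filter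
        (fun T : Finset (Fin n) => ∀ j : Fin d, (T ∩ I j).card = 1),
      fhat T * ∏ i ∈ T, x i :=
  expectation_sign_twist_formula_general n d fhat hdeg I hdisj x
end

section
/- For even n, the hypercube {-1,1}^n can be covered by n skewed hyperplanes: namely the n-1 hyperplanes x1+...+xn = 2k-n for k = 1,...,n-1, together with the hyperplane x1+...+x_{n/2} - x_{n/2+1} - ... - x_n = 0. -/
theorem even_cube_covered_by_n_skewed_hyperplanes
    (n : ℕ) (hn : 0 < n) (heven : Even n)
    (x : Fin n → ℝ) (hx : ∀ i, x i = 1 ∨ x i = -1) :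
    (∃ k : ℕ, 1 ≤ k ∧ k ≤ n - 1 ∧ (∑ i, x i) = 2 * (k : ℝ) - n) ∨
    ((∑ i ∈ Finset.univ.filter fun i : Fin n => (i : ℕ) < n / 2, x i) -
      (∑ i ∈ Finset.univ.filter fun i : Fin n => ¬ (i : ℕ) < n / 2, x i)) = 0 := by
  classical
  set S := Finset.univ.filter (fun i => x i = 1) with hS
  have hcard2 : (Finset.univ.filter fun i : Fin n => (i : ℕ) < n / 2).card = n / 2 := by
    have hlt : n / 2 < n := Nat.div_lt_self hn (by norm_num)
    have he : (Finset.univ.filter fun i : Fin n => (i : ℕ) < n / 2)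
        = Finset.Iio ⟨n / 2, hlt⟩ := by
      ext i; simp [Fin.lt_def]
    rw [he, Fin.card_Iio]
  have htot : (Finset.univ.filter fun i : Fin n => (i : ℕ) < n / 2).card
      + (Finset.univ.filter fun i : Fin n => ¬ (i : ℕ) < n / 2).card = n := by
    rw [Finset.card_filter_add_card_filter_not]
    simp
  have hcard2' : (Finset.univ.filter fun i : Fin n => ¬ (i : ℕ) < n / 2).card = n / 2 := by
    obtain ⟨m, hm⟩ := heven
    omega
  have key : ∀ c : ℝ, (∀ i, x i = c) →
      ((∑ i ∈ Finset.univ.filter fun i : Fin n => (i : ℕ) < n / 2, x i) -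
        (∑ i ∈ Finset.univ.filter fun i : Fin n => ¬ (i : ℕ) < n / 2, x i)) = 0 := by
    intro c hc
    rw [Finset.sum_congr rfl (fun i _ => hc i), Finset.sum_congr rfl (fun i _ => hc i),
      Finset.sum_const, Finset.sum_const, hcard2, hcard2', sub_self]
  have hScard : S.card ≤ n := by
    simpa using Finset.card_le_card (Finset.subset_univ S)
  have hStot : S.card + (Finset.univ.filter fun i => ¬ x i = 1).card = n := by
    rw [hS, Finset.card_filter_add_card_filter_not]
    simp
  have hsum : ∑ i, x i = 2 * (S.card : ℝ) - n := by
    rw [← Finset.sum_filter_add_sum_filter_not Finset.univ (fun i => x i = 1)]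
    have h1 : ∑ i ∈ S, x i = (S.card : ℝ) := by
      rw [Finset.sum_congr rfl (fun i hi => (Finset.mem_filter.mp hi).2), Finset.sum_const]
      simp [hS]
    have h2 : ∑ i ∈ Finset.univ.filter (fun i => ¬ x i = 1), x i
        = -(((Finset.univ.filter (fun i => ¬ x i = 1)).card : ℝ)) := by
      rw [Finset.sum_congr rfl
        (fun i hi => (hx i).resolve_left (Finset.mem_filter.mp hi).2), Finset.sum_const]
      simp
    rw [← hS, h1, h2]
    have : ((Finset.univ.filter (fun i => ¬ x i = 1)).card : ℝ) = n - S.card := by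
      have := hStot
      push_cast [← this]
      ring
    rw [this]
    ring
  by_cases h0 : S.card = 0
  · right
    refine key (-1) (fun i => (hx i).resolve_left fun h1 => ?_)
    have : i ∈ S := by simp [hS, h1]
    rw [Finset.card_eq_zero.mp h0] at this
    exact absurd this (Finset.notMem_empty i)
  by_cases hN : S.card = n
  · right
    refine key 1 (fun i => ?_)
    have hu : S = Finset.univ := Finset.eq_univ_of_card S (by simpa using hN)
    have : i ∈ S := hu ▸ Finset.mem_univ i
    exact (Finset.mem_filter.mp this).2
  · left
    exact ⟨S.card, by omega, by omega, hsum⟩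
end
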